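/- arXiv:1204.1305 — 5 statements merged into one kernel-verified Lean document; each statement's English description precedes it below -/
import Mathlib

section
/- Let (Ξ, λ) be a measure space and let X be a locally compact, σ-compact metric space. Suppose given, for each ξ ∈ Ξ and each t ∈ [0,∞), a Borel measure ν_{ξ,t} on X which is finite on compact sets, such that: (i) for every nonnegative continuous compactly supported a : X → ℝ and every ξ ∈ Ξ, the function t ↦ ∫_X a dν_{ξ,t} is nondecreasing on [0,∞); (ii) for every continuous compactly supported a and every t ≥ 0, the function ξ ↦ ∫_X a dν_{ξ,t} is λ-measurable; (iii) there is a Borel measure μ on X, finite on compact sets, such that ∫_Ξ ( ∫_X a dν_{ξ,t} ) dλ(ξ) ≤ ∫_X a dμ for every nonnegative continuous compactly supported a and every t ≥ 0. Then there exists a λ-null set 𝒳 ⊆ Ξ such that for every ξ ∉ 𝒳 there is a Borel measure μ_ξ on X, finite on compact sets, with lim_{t→∞} ∫_X a dν_{ξ,t} = ∫_X a dμ_ξ for every continuous compactly supported a : X → ℝ. Moreover, for every nonnegative continuous compactly supported a, the function ξ ↦ ∫_X a dμ_ξ is λ-measurable off 𝒳 and ∫_Ξ ( ∫_X a dμ_ξ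 ) dλ(ξ) ≤ ∫_X a dμ. -/
open MeasureTheory Set Filter
open scoped ENNReal

namespace Stmt7Aux

open scoped ENNReal

lemma tsum_iSup_nat {f : ℕ → ℕ → ℝ≥0∞} (hm : ∀ i, Monotone fun n => f n i) :
    ∑' i, ⨆ n, f n i = ⨆ n, ∑' i, f n i := by
  have := lintegral_iSup (μ := Measure.count (α := ℕ)) (f := f)
    (fun n => measurable_of_countable _) (fun a b hab i => hm i hab)
  simpa [MeasureTheory.lintegral_count] using this

variable {X : Type*} [MeasurableSpace X]

/-- The monotone limit of a monotone sequence of measures. -/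
noncomputable def mlim (νn : ℕ → Measure X)
    (hm : ∀ s : Set X, Monotone fun n => νn n s) : Measure X :=
  Measure.ofMeasurable (fun s _ => ⨆ n, νn n s)
    (by simp)
    (by
      intro s hs hd
      simp_rw [measure_iUnion hd hs]
      exact (tsum_iSup_nat fun i a b hab => hm (s i) hab).symm)

lemma mlim_apply (νn : ℕ → Measure X) (hm : ∀ s : Set X, Monotone fun n => νn n s)
    {s : Set X} (hs : MeasurableSet s) : mlim νn hm s = ⨆ n, νn n s :=
  Measure.ofMeasurable_apply s hs

lemma mlim_simple (νn : ℕ → Measure X) (hm : ∀ s : Set X, Monotone fun n => νn n s)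
    (g : SimpleFunc X ℝ≥0∞) :
    g.lintegral (mlim νn hm) = ⨆ n, g.lintegral (νn n) := by
  simp only [SimpleFunc.lintegral]
  rw [← ENNReal.finsetSum_iSup_of_monotone (fun x i j hij =>
    mul_le_mul_right (hm (g ⁻¹' {x}) hij) x)]
  exact Finset.sum_congr rfl fun x _ => by
    rw [mlim_apply νn hm (g.measurableSet_preimage _), ENNReal.mul_iSup]

lemma lintegral_mlim (νn : ℕ → Measure X) (hm : ∀ s : Set X, Monotone fun n => νn n s)
    {f : X → ℝ≥0∞} (hf : Measurable f) :
    ∫⁻ x, f x ∂(mlim νn hm) = ⨆ n, ∫⁻ x, f x ∂(νn n) := by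
  rw [lintegral_eq_iSup_eapprox_lintegral hf]
  simp_rw [mlim_simple νn hm]
  rw [iSup_comm]
  exact iSup_congr fun m => (lintegral_eq_iSup_eapprox_lintegral hf).symm

lemma measure_le_lintegral_ofReal (m : Measure X) {C : Set X} (hC : MeasurableSet C)
    {f : X → ℝ} (h1 : ∀ x ∈ C, f x = 1) (h0 : ∀ x, 0 ≤ f x) :
    m C ≤ ∫⁻ x, ENNReal.ofReal (f x) ∂m := by
  rw [← setLIntegral_one C, ← lintegral_indicator hC]
  refine lintegral_mono fun x => ?_
  by_cases hx : x ∈ C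
  · simp [hx, h1 x hx]
  · simp [hx]

lemma lintegral_ofReal_le_measure (m : Measure X) {U : Set X} (hU : MeasurableSet U)
    {f : X → ℝ} (h0 : ∀ x ∉ U, f x = 0) (h1 : ∀ x, f x ≤ 1) :
    ∫⁻ x, ENNReal.ofReal (f x) ∂m ≤ m U := by
  rw [← setLIntegral_one U, ← lintegral_indicator hU]
  refine lintegral_mono fun x => ?_
  by_cases hx : x ∈ U
  · simpa [hx] using ENNReal.ofReal_le_one.2 (h1 x)
  · simp [hx, h0 x hx]

end Stmt7Aux

open Stmt7Aux

set_option maxHeartbeats 1000000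

/-- **Construction of the limiting measures `μ_ξ`.**
Given a family of measures `ν_{ξ,t}` on a locally compact σ-compact metric space, monotone
in `t` when tested against nonnegative compactly supported continuous functions, measurable
in `ξ`, and dominated on average by a fixed measure `μ`, there is a null set `𝒳` off which
the measures `ν_{ξ,t}` converge weakly-* as `t → ∞` to limiting measures `μ_ξ`, whose
integrals are measurable in `ξ` and still dominated on average by `μ`. -/
theorem stmt7 {Ξ : Type*} [MeasurableSpace Ξ] (lam : Measure Ξ)
    {X : Type*} [MetricSpace X] [LocallyCompactSpace X] [SigmaCompactSpace X]
    [MeasurableSpace X] [BorelSpace X]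
    (ν : Ξ → ℝ → Measure X)
    (hfin : ∀ ξ : Ξ, ∀ t : ℝ, 0 ≤ t → IsFiniteMeasureOnCompacts (ν ξ t))
    (hmono : ∀ a : X → ℝ, Continuous a → HasCompactSupport a → (∀ x, 0 ≤ a x) →
      ∀ ξ : Ξ, ∀ s t : ℝ, 0 ≤ s → s ≤ t →
        ∫ x, a x ∂(ν ξ s) ≤ ∫ x, a x ∂(ν ξ t))
    (hmeas : ∀ a : X → ℝ, Continuous a → HasCompactSupport a → ∀ t : ℝ, 0 ≤ t →
      AEMeasurable (fun ξ => ∫ x, a x ∂(ν ξ t)) lam)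
    (μ : Measure X) (hμfin : IsFiniteMeasureOnCompacts μ)
    (hdom : ∀ a : X → ℝ, Continuous a → HasCompactSupport a → (∀ x, 0 ≤ a x) →
      ∀ t : ℝ, 0 ≤ t →
        ∫⁻ ξ, ENNReal.ofReal (∫ x, a x ∂(ν ξ t)) ∂lam ≤
          ENNReal.ofReal (∫ x, a x ∂μ)) :
    ∃ 𝒳 : Set Ξ, lam 𝒳 = 0 ∧
      ∃ μlim : Ξ → Measure X,
        (∀ ξ ∉ 𝒳, IsFiniteMeasureOnCompacts (μlim ξ) ∧
          ∀ a : X → ℝ, Continuous a → HasCompactSupport a →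
            Tendsto (fun t : ℝ => ∫ x, a x ∂(ν ξ t)) atTop
              (nhds (∫ x, a x ∂(μlim ξ)))) ∧
        (∀ a : X → ℝ, Continuous a → HasCompactSupport a → (∀ x, 0 ≤ a x) →
          AEMeasurable (fun ξ => ∫ x, a x ∂(μlim ξ)) lam ∧
          ∫⁻ ξ, ENNReal.ofReal (∫ x, a x ∂(μlim ξ)) ∂lam ≤
            ENNReal.ofReal (∫ x, a x ∂μ)) := by
  classical
  -- Step 1: the measures are monotone in `t`, as measures.
  have key : ∀ (ξ : Ξ) (s t : ℝ), 0 ≤ s → s ≤ t → ∀ E : Set X, ν ξ s E ≤ ν ξ t E := by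
    intro ξ s t hs hst E
    haveI := hfin ξ s hs
    haveI := hfin ξ t (hs.trans hst)
    have hopen : ∀ U : Set X, IsOpen U → ν ξ s U ≤ ν ξ t U := by
      intro U hU
      rw [hU.measure_eq_iSup_isCompact (ν ξ s)]
      refine iSup₂_le fun K hKU => iSup_le fun hK => ?_
      obtain ⟨f, hf1, hf0, hfc, hf01⟩ :=
        exists_continuous_one_zero_of_isCompact hK hU.isClosed_compl
          (disjoint_compl_right_iff_subset.mpr hKU)
      have hfint_s : Integrable (⇑f) (ν ξ s) :=
        f.continuous.integrable_of_hasCompactSupport hfc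
      calc ν ξ s K ≤ ∫⁻ x, ENNReal.ofReal (f x) ∂(ν ξ s) :=
            measure_le_lintegral_ofReal _ hK.measurableSet (fun x hx => hf1 hx)
              (fun x => (hf01 x).1)
        _ = ENNReal.ofReal (∫ x, f x ∂(ν ξ s)) :=
            (ofReal_integral_eq_lintegral_ofReal hfint_s
              (ae_of_all _ fun x => (hf01 x).1)).symm
        _ ≤ ENNReal.ofReal (∫ x, f x ∂(ν ξ t)) :=
            ENNReal.ofReal_le_ofReal
              (hmono f f.continuous hfc (fun x => (hf01 x).1) ξ s t hs hst)
        _ = ∫⁻ x, ENNReal.ofReal (f x) ∂(ν ξ t) :=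
            ofReal_integral_eq_lintegral_ofReal
              (f.continuous.integrable_of_hasCompactSupport hfc)
              (ae_of_all _ fun x => (hf01 x).1)
        _ ≤ ν ξ t U :=
            lintegral_ofReal_le_measure _ hU.measurableSet
              (fun x hx => hf0 hx) (fun x => (hf01 x).2)
    calc ν ξ s E ≤ ⨅ (U : Set X) (_ : E ⊆ U) (_ : IsOpen U), ν ξ t U :=
          le_iInf₂ fun U hEU => le_iInf fun hU =>
            le_trans (measure_mono hEU) (hopen U hU)
      _ = ν ξ t E := (Set.measure_eq_iInf_isOpen E (ν ξ t)).symm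
  have hmN : ∀ ξ : Ξ, ∀ E : Set X, Monotone fun n : ℕ => ν ξ n E := fun ξ E n n' h =>
    key ξ n n' (Nat.cast_nonneg n) (Nat.cast_le.2 h) E
  set Mlim : Ξ → Measure X := fun ξ => mlim (fun n => ν ξ n) (hmN ξ) with hMlim
  -- Step 2: the null set, via a compact exhaustion.
  set K : CompactExhaustion X := CompactExhaustion.choice X with hK
  have hφ : ∀ m : ℕ, ∃ f : X → ℝ, Continuous f ∧ EqOn f 1 (K m) ∧ HasCompactSupport f ∧
      ∀ x, f x ∈ Icc (0:ℝ) 1 := by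
    intro m
    obtain ⟨f, h1, _, hc, h01⟩ :=
      exists_continuous_one_zero_of_isCompact (K.isCompact m) isClosed_empty
        (by simp : Disjoint (K m : Set X) (∅ : Set X))
    exact ⟨f, f.continuous, h1, hc, h01⟩
  choose φ hφcont hφ1 hφc hφ01 using hφ
  set g : ℕ → Ξ → ℝ≥0∞ := fun m ξ => ⨆ n : ℕ, ENNReal.ofReal (∫ x, φ m x ∂ν ξ n) with hg
  have hglt : ∀ m : ℕ, ∀ᵐ ξ ∂lam, g m ξ < ∞ := by
    intro m
    refine ae_lt_top' (AEMeasurable.iSup fun (n : ℕ) =>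
      (hmeas (φ m) (hφcont m) (hφc m) n (Nat.cast_nonneg n)).ennreal_ofReal) ?_
    have : ∫⁻ ξ, g m ξ ∂lam = ⨆ n : ℕ, ∫⁻ ξ, ENNReal.ofReal (∫ x, φ m x ∂ν ξ n) ∂lam :=
      lintegral_iSup'
        (fun (n : ℕ) => (hmeas (φ m) (hφcont m) (hφc m) n (Nat.cast_nonneg n)).ennreal_ofReal)
        (ae_of_all _ fun ξ (n n' : ℕ) h => ENNReal.ofReal_le_ofReal
          (hmono (φ m) (hφcont m) (hφc m) (fun x => (hφ01 m x).1) ξ n n'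
            (Nat.cast_nonneg n) (Nat.cast_le.2 h)))
    rw [this]
    exact (iSup_le fun (n : ℕ) => hdom (φ m) (hφcont m) (hφc m) (fun x => (hφ01 m x).1) n
      (Nat.cast_nonneg n)).trans_lt ENNReal.ofReal_lt_top |>.ne
  have hae' : ∀ᵐ ξ ∂lam, ∀ m : ℕ, g m ξ < ∞ := ae_all_iff.2 hglt
  set 𝒳 : Set Ξ := {ξ | ¬ ∀ m : ℕ, g m ξ < ∞} with h𝒳def
  have h𝒳 : lam 𝒳 = 0 := ae_iff.1 hae'
  -- Step 3: main properties off the null set.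
  have hmain : ∀ ξ ∉ 𝒳, IsFiniteMeasureOnCompacts (Mlim ξ) ∧
      ∀ a : X → ℝ, Continuous a → HasCompactSupport a →
        Tendsto (fun t : ℝ => ∫ x, a x ∂(ν ξ t)) atTop (nhds (∫ x, a x ∂(Mlim ξ))) := by
    intro ξ hξ
    have hξ' : ∀ m : ℕ, g m ξ < ∞ := not_not.1 hξ
    have hfinlim : IsFiniteMeasureOnCompacts (Mlim ξ) := by
      constructor
      intro C hC
      obtain ⟨m, hCm⟩ := K.exists_superset_of_isCompact hC
      rw [hMlim]
      rw [mlim_apply _ (hmN ξ) hC.measurableSet]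
      refine lt_of_le_of_lt (iSup_le fun n => ?_) (hξ' m)
      haveI := hfin ξ n (Nat.cast_nonneg n)
      calc ν ξ n C ≤ ∫⁻ x, ENNReal.ofReal (φ m x) ∂(ν ξ n) :=
            measure_le_lintegral_ofReal _ hC.measurableSet
              (fun x hx => hφ1 m (hCm hx)) (fun x => (hφ01 m x).1)
        _ = ENNReal.ofReal (∫ x, φ m x ∂ν ξ n) :=
            (ofReal_integral_eq_lintegral_ofReal
              ((hφcont m).integrable_of_hasCompactSupport (hφc m))
              (ae_of_all _ fun x => (hφ01 m x).1)).symm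
        _ ≤ g m ξ := le_iSup (fun n : ℕ => ENNReal.ofReal (∫ x, φ m x ∂ν ξ n)) n
    refine ⟨hfinlim, ?_⟩
    have tends_nonneg : ∀ a : X → ℝ, Continuous a → HasCompactSupport a → (∀ x, 0 ≤ a x) →
        Tendsto (fun t : ℝ => ∫ x, a x ∂(ν ξ t)) atTop (nhds (∫ x, a x ∂(Mlim ξ))) := by
      intro a hca hcs hnn
      haveI := hfinlim
      have hintlim : Integrable a (Mlim ξ) := hca.integrable_of_hasCompactSupport hcs
      have hLeq : ∫⁻ x, ENNReal.ofReal (a x) ∂(Mlim ξ)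
          = ⨆ n : ℕ, ENNReal.ofReal (∫ x, a x ∂ν ξ n) := by
        rw [hMlim]
        rw [lintegral_mlim _ (hmN ξ) hca.measurable.ennreal_ofReal]
        refine iSup_congr fun n => ?_
        haveI := hfin ξ n (Nat.cast_nonneg n)
        exact (ofReal_integral_eq_lintegral_ofReal
          (hca.integrable_of_hasCompactSupport hcs) (ae_of_all _ hnn)).symm
      have hofReal : ENNReal.ofReal (∫ x, a x ∂(Mlim ξ)) = ∫⁻ x, ENNReal.ofReal (a x) ∂(Mlim ξ) :=
        ofReal_integral_eq_lintegral_ofReal hintlim (ae_of_all _ hnn)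
      have hfinA : ∫⁻ x, ENNReal.ofReal (a x) ∂(Mlim ξ) ≠ ∞ := by
        rw [← hofReal]; exact ENNReal.ofReal_ne_top
      have hseq : Tendsto (fun n : ℕ => ∫ x, a x ∂ν ξ n) atTop
          (nhds (∫ x, a x ∂(Mlim ξ))) := by
        have h1 : Tendsto (fun n : ℕ => ENNReal.ofReal (∫ x, a x ∂ν ξ n)) atTop
            (nhds (∫⁻ x, ENNReal.ofReal (a x) ∂(Mlim ξ))) := by
          rw [hLeq]
          exact tendsto_atTop_iSup fun n n' h => ENNReal.ofReal_le_ofReal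
            (hmono a hca hcs hnn ξ n n' (Nat.cast_nonneg n) (Nat.cast_le.2 h))
        have h2 := (ENNReal.tendsto_toReal hfinA).comp h1
        have e2 : (∫⁻ x, ENNReal.ofReal (a x) ∂(Mlim ξ)).toReal = ∫ x, a x ∂(Mlim ξ) := by
          rw [← hofReal, ENNReal.toReal_ofReal (integral_nonneg hnn)]
        rw [e2] at h2
        refine h2.congr fun n => ?_
        simp only [Function.comp]
        exact ENNReal.toReal_ofReal (integral_nonneg hnn)
      have hfloor : Tendsto (fun t : ℝ => ∫ x, a x ∂ν ξ (⌊t⌋₊ : ℕ)) atTop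
          (nhds (∫ x, a x ∂(Mlim ξ))) := hseq.comp (tendsto_nat_floor_atTop (α := ℝ))
      have hceil : Tendsto (fun t : ℝ => ∫ x, a x ∂ν ξ (⌈t⌉₊ : ℕ)) atTop
          (nhds (∫ x, a x ∂(Mlim ξ))) := hseq.comp (tendsto_nat_ceil_atTop (α := ℝ))
      refine tendsto_of_tendsto_of_tendsto_of_le_of_le' hfloor hceil ?_ ?_
      · filter_upwards [eventually_ge_atTop (0:ℝ)] with t ht
        exact hmono a hca hcs hnn ξ _ t (Nat.cast_nonneg _) (Nat.floor_le ht)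
      · filter_upwards [eventually_ge_atTop (0:ℝ)] with t ht
        exact hmono a hca hcs hnn ξ t _ ht (Nat.le_ceil t)
    intro a hca hcs
    haveI := hfinlim
    set P : X → ℝ := fun x => max (a x) 0 with hP
    set N : X → ℝ := fun x => max (-a x) 0 with hN
    have hPc : Continuous P := hca.max continuous_const
    have hNc : Continuous N := hca.neg.max continuous_const
    have hPs : HasCompactSupport P := by
      refine hcs.mono' ?_
      intro x hx
      refine subset_tsupport a ?_
      simp only [Function.mem_support, hP] at hx ⊢
      intro h; exact hx (by simp [h])
    have hNs : HasCompactSupport N := by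
      refine hcs.mono' ?_
      intro x hx
      refine subset_tsupport a ?_
      simp only [Function.mem_support, hN] at hx ⊢
      intro h; exact hx (by simp [h])
    have key_eq : ∀ m : Measure X, Integrable a m →
        ∫ x, a x ∂m = (∫ x, P x ∂m) - ∫ x, N x ∂m := by
      intro m hint
      rw [← integral_sub hint.pos_part hint.neg_part]
      refine integral_congr_ae (ae_of_all _ fun x => ?_)
      exact (max_zero_sub_max_neg_zero_eq_self (a x)).symm
    have hPt := tends_nonneg P hPc hPs (fun x => le_max_right _ _)
    have hNt := tends_nonneg N hNc hNs (fun x => le_max_right _ _)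
    have hT := hPt.sub hNt
    rw [key_eq (Mlim ξ) (hca.integrable_of_hasCompactSupport hcs)]
    refine hT.congr' ?_
    filter_upwards [eventually_ge_atTop (0:ℝ)] with t ht
    haveI := hfin ξ t ht
    exact (key_eq (ν ξ t) (hca.integrable_of_hasCompactSupport hcs)).symm
  refine ⟨𝒳, h𝒳, Mlim, hmain, ?_⟩
  intro a hca hcs hnn
  have h0 : ∀ᵐ ξ ∂lam, ξ ∉ 𝒳 := by
    rw [ae_iff]
    simpa using h𝒳
  have htend_ae : ∀ᵐ ξ ∂lam, Tendsto (fun n : ℕ => ∫ x, a x ∂ν ξ n) atTop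
      (nhds (∫ x, a x ∂(Mlim ξ))) := by
    filter_upwards [h0] with ξ hξ
    exact ((hmain ξ hξ).2 a hca hcs).comp tendsto_natCast_atTop_atTop
  have hAE : AEMeasurable (fun ξ => ∫ x, a x ∂(Mlim ξ)) lam :=
    aemeasurable_of_tendsto_metrizable_ae atTop
      (fun (n : ℕ) => hmeas a hca hcs n (Nat.cast_nonneg n)) htend_ae
  refine ⟨hAE, ?_⟩
  have heq_ae : ∀ᵐ ξ ∂lam, ENNReal.ofReal (∫ x, a x ∂(Mlim ξ))
      = ⨆ n : ℕ, ENNReal.ofReal (∫ x, a x ∂ν ξ n) := by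
    filter_upwards [h0] with ξ hξ
    haveI := (hmain ξ hξ).1
    rw [ofReal_integral_eq_lintegral_ofReal (hca.integrable_of_hasCompactSupport hcs)
      (ae_of_all _ hnn), hMlim]
    rw [lintegral_mlim _ (hmN ξ) hca.measurable.ennreal_ofReal]
    refine iSup_congr fun n => ?_
    haveI := hfin ξ n (Nat.cast_nonneg n)
    exact (ofReal_integral_eq_lintegral_ofReal
      (hca.integrable_of_hasCompactSupport hcs) (ae_of_all _ hnn)).symm
  calc ∫⁻ ξ, ENNReal.ofReal (∫ x, a x ∂(Mlim ξ)) ∂lam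
      = ∫⁻ ξ, ⨆ n : ℕ, ENNReal.ofReal (∫ x, a x ∂ν ξ n) ∂lam := lintegral_congr_ae heq_ae
    _ = ⨆ n : ℕ, ∫⁻ ξ, ENNReal.ofReal (∫ x, a x ∂ν ξ n) ∂lam :=
        lintegral_iSup' (fun (n : ℕ) => (hmeas a hca hcs n (Nat.cast_nonneg n)).ennreal_ofReal)
          (ae_of_all _ fun ξ (n n' : ℕ) h => ENNReal.ofReal_le_ofReal
            (hmono a hca hcs hnn ξ n n' (Nat.cast_nonneg n) (Nat.cast_le.2 h)))
    _ ≤ ENNReal.ofReal (∫ x, a x ∂μ) :=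
        iSup_le fun (n : ℕ) => hdom a hca hcs hnn n (Nat.cast_nonneg n)
end

section
/- Let n ∈ ℕ and let J ⊂ ℝ be a compact interval. Let θ be a Schwartz function on ℝ whose Fourier transform θ̂(t) = ∫_ℝ e^{−its} θ(s) ds is compactly supported and equal to 1 in a neighbourhood of t = 0, and set θ_h(s) = h^{−1} θ(s/h) for h ∈ (0,1]. Suppose that for each h ∈ (0,1] we are given: (a) a smooth function S_h : ℝ → ℂ whose derivative S_h' is supported in J and which satisfies, for every k ≥ 0, sup_{s∈ℝ} |∂_s^k S_h(s)| ≤ C_k h^{−n−1−k/2} with C_k independent of h; and (b) a bounded measurable function Q_h : ℝ → ℂ and a number ε(h) ≥ 0 such that |Q_h(s+u) − Q_h(s)| ≤ ε(h) for all s ∈ ℝ and all u ∈ [0,h]. Then: (1) for every N ∈ ℕ there is a constant C'_N, independent of h, with sup_{s∈ℝ} |S_h(s) − (S_h ⋆ θ_h)(s)| ≤ C'_N h^N; and (2) sup_{s∈ℝ} |Q_h(s) − (Q_h ⋆ θ_h)(s)| ≤ C ε(h), where C = ∫_ℝ (1+|v|) |θ(v)| dv. In particular sup_{s∈ℝ}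 |(S_h+Q_h)(s) − ((S_h+Q_h) ⋆ θ_h)(s)| ≤ C'_N h^N + C ε(h) for every N. -/
open MeasureTheory Set

noncomputable section


lemma aux_int_pow (θ : SchwartzMap ℝ ℂ) (m : ℕ) :
    Integrable (fun x : ℝ => (x:ℂ)^m * θ x) := by
  refine (θ.integrable_pow_mul volume m).mono' ?_ ?_
  · exact ((Complex.continuous_ofReal.pow m).mul θ.continuous).aestronglyMeasurable
  · filter_upwards with x
    simp [norm_mul, norm_pow, Complex.norm_real]

lemma aux_int_pow_real (θ : SchwartzMap ℝ ℂ) (m : ℕ) :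
    Integrable (fun x : ℝ => |x|^m * ‖θ x‖) := by
  have := θ.integrable_pow_mul (volume) m
  simpa [Real.norm_eq_abs] using this

lemma aux_comp (θ : SchwartzMap ℝ ℂ) {h : ℝ} (hh : 0 < h) (m : ℕ) :
    Integrable (fun v : ℝ => (v:ℂ)^m * (Complex.ofReal h⁻¹ * θ (v/h))) := by
  have hne : h ≠ 0 := ne_of_gt hh
  have hg0 : (fun u : ℝ => (((h*u : ℝ)):ℂ)^m * (Complex.ofReal h⁻¹ * θ u))
      = fun u : ℝ => ((h:ℂ)^m * Complex.ofReal h⁻¹) * ((u:ℂ)^m * θ u) := by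
    funext u; push_cast; ring
  have hg : Integrable (fun u : ℝ => (((h*u : ℝ)):ℂ)^m * (Complex.ofReal h⁻¹ * θ u)) := by
    rw [hg0]; exact (aux_int_pow θ m).const_mul _
  refine (hg.comp_div hne).congr (Filter.Eventually.of_forall fun v => ?_)
  have hc : h * (v/h) = v := by field_simp
  simp only [hc]

lemma aux_val (θ : SchwartzMap ℝ ℂ) {h : ℝ} (hh : 0 < h) (m : ℕ) :
    (∫ v : ℝ, (v:ℂ)^m * (Complex.ofReal h⁻¹ * θ (v/h)))
      = (h:ℂ)^m * ∫ u : ℝ, (u:ℂ)^m * θ u := by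
  have hne : h ≠ 0 := ne_of_gt hh
  have hcne : (h:ℂ) ≠ 0 := Complex.ofReal_ne_zero.2 hne
  have h1 : (∫ v : ℝ, (v:ℂ)^m * (Complex.ofReal h⁻¹ * θ (v/h)))
      = ∫ v : ℝ, (fun u : ℝ => (((h*u : ℝ)):ℂ)^m * (Complex.ofReal h⁻¹ * θ u)) (v/h) := by
    congr 1; funext v
    have hc : h * (v/h) = v := by field_simp
    simp only [hc]
  rw [h1, MeasureTheory.Measure.integral_comp_div
    (fun u : ℝ => (((h*u : ℝ)):ℂ)^m * (Complex.ofReal h⁻¹ * θ u)) h,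
    abs_of_pos hh, Complex.real_smul]
  have hg0 : (fun u : ℝ => (((h*u : ℝ)):ℂ)^m * (Complex.ofReal h⁻¹ * θ u))
      = fun u : ℝ => ((h:ℂ)^m * Complex.ofReal h⁻¹) * ((u:ℂ)^m * θ u) := by
    funext u; push_cast; ring
  rw [hg0, integral_const_mul, Complex.ofReal_inv]
  field_simp

lemma aux_comp_real (θ : SchwartzMap ℝ ℂ) {h : ℝ} (hh : 0 < h) (m : ℕ) :
    Integrable (fun v : ℝ => |v|^m * ‖Complex.ofReal h⁻¹ * θ (v/h)‖) := by
  have hne : h ≠ 0 := ne_of_gt hh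
  have hg0 : (fun u : ℝ => |h*u|^m * ‖Complex.ofReal h⁻¹ * θ u‖)
      = fun u : ℝ => (h^m * h⁻¹) * (|u|^m * ‖θ u‖) := by
    funext u
    rw [abs_mul, abs_of_pos hh, norm_mul, Complex.norm_real, Real.norm_eq_abs,
      abs_of_pos (inv_pos.2 hh), mul_pow]
    ring
  have hg : Integrable (fun u : ℝ => |h*u|^m * ‖Complex.ofReal h⁻¹ * θ u‖) := by
    rw [hg0]; exact (aux_int_pow_real θ m).const_mul _
  refine (hg.comp_div hne).congr (Filter.Eventually.of_forall fun v => ?_)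
  have hc : h * (v/h) = v := by field_simp
  simp only [hc]

lemma aux_norm_val (θ : SchwartzMap ℝ ℂ) {h : ℝ} (hh : 0 < h) (m : ℕ) :
    (∫ v : ℝ, |v|^m * ‖Complex.ofReal h⁻¹ * θ (v/h)‖)
      = h^m * ∫ u : ℝ, |u|^m * ‖θ u‖ := by
  have hne : h ≠ 0 := ne_of_gt hh
  have h1 : (∫ v : ℝ, |v|^m * ‖Complex.ofReal h⁻¹ * θ (v/h)‖)
      = ∫ v : ℝ, (fun u : ℝ => |h*u|^m * ‖Complex.ofReal h⁻¹ * θ u‖) (v/h) := by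
    congr 1; funext v
    have hc : h * (v/h) = v := by field_simp
    simp only [hc]
  rw [h1, MeasureTheory.Measure.integral_comp_div
    (fun u : ℝ => |h*u|^m * ‖Complex.ofReal h⁻¹ * θ u‖) h, abs_of_pos hh, smul_eq_mul]
  have hg0 : (fun u : ℝ => |h*u|^m * ‖Complex.ofReal h⁻¹ * θ u‖)
      = fun u : ℝ => (h^m * h⁻¹) * (|u|^m * ‖θ u‖) := by
    funext u
    rw [abs_mul, abs_of_pos hh, norm_mul, Complex.norm_real, Real.norm_eq_abs,
      abs_of_pos (inv_pos.2 hh), mul_pow]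
    ring
  rw [hg0, integral_const_mul]
  field_simp

lemma aux_q_int (θ : SchwartzMap ℝ ℂ) {h : ℝ} (hh : 0 < h) :
    Integrable (fun v : ℝ => (1 + |v|/h) * ‖Complex.ofReal h⁻¹ * θ (v/h)‖) := by
  have hne : h ≠ 0 := ne_of_gt hh
  have hbase : Integrable (fun u : ℝ => (1 + |u|) * ‖θ u‖) := by
    have h2 := aux_int_pow_real θ 1
    simp only [pow_one] at h2
    refine (θ.integrable.norm.add h2).congr (Filter.Eventually.of_forall fun u => ?_)
    simp only [Pi.add_apply]
    ring
  have hg0 : (fun u : ℝ => (1 + |h*u|/h) * ‖Complex.ofReal h⁻¹ * θ u‖)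
      = fun u : ℝ => h⁻¹ * ((1 + |u|) * ‖θ u‖) := by
    funext u
    rw [abs_mul, abs_of_pos hh, norm_mul, Complex.norm_real, Real.norm_eq_abs,
      abs_of_pos (inv_pos.2 hh)]
    field_simp
  have hg : Integrable (fun u : ℝ => (1 + |h*u|/h) * ‖Complex.ofReal h⁻¹ * θ u‖) := by
    rw [hg0]; exact hbase.const_mul _
  refine (hg.comp_div hne).congr (Filter.Eventually.of_forall fun v => ?_)
  have hc : h * (v/h) = v := by field_simp
  simp only [hc]

lemma aux_q_val (θ : SchwartzMap ℝ ℂ) {h : ℝ} (hh : 0 < h) :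
    (∫ v : ℝ, (1 + |v|/h) * ‖Complex.ofReal h⁻¹ * θ (v/h)‖)
      = ∫ u : ℝ, (1 + |u|) * ‖θ u‖ := by
  have hne : h ≠ 0 := ne_of_gt hh
  have h1 : (∫ v : ℝ, (1 + |v|/h) * ‖Complex.ofReal h⁻¹ * θ (v/h)‖)
      = ∫ v : ℝ, (fun u : ℝ => (1 + |h*u|/h) * ‖Complex.ofReal h⁻¹ * θ u‖) (v/h) := by
    congr 1; funext v
    have hc : h * (v/h) = v := by field_simp
    simp only [hc]
  rw [h1, MeasureTheory.Measure.integral_comp_div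
    (fun u : ℝ => (1 + |h*u|/h) * ‖Complex.ofReal h⁻¹ * θ u‖) h, abs_of_pos hh, smul_eq_mul]
  have hg0 : (fun u : ℝ => (1 + |h*u|/h) * ‖Complex.ofReal h⁻¹ * θ u‖)
      = fun u : ℝ => h⁻¹ * ((1 + |u|) * ‖θ u‖) := by
    funext u
    rw [abs_mul, abs_of_pos hh, norm_mul, Complex.norm_real, Real.norm_eq_abs,
      abs_of_pos (inv_pos.2 hh)]
    field_simp
  rw [hg0, integral_const_mul]
  field_simp

section MomentSection
open Real Complex FourierTransform
lemma aux_fourier_rel (θ : SchwartzMap ℝ ℂ) (w : ℝ) :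
    𝓕 (fun x : ℝ => (θ x : ℂ)) w
      = ∫ s : ℝ, Complex.exp (-(Complex.I * Complex.ofReal ((2 * π * w) * s))) * θ s := by
  rw [Real.fourier_real_eq_integral_exp_smul]
  congr 1 with s
  rw [smul_eq_mul]
  congr 1
  push_cast
  ring_nf

lemma aux_moments (θ : SchwartzMap ℝ ℂ)
    (hθhat1 : ∀ᶠ t in nhds (0:ℝ),
      (∫ s : ℝ, Complex.exp (-(Complex.I * Complex.ofReal (t * s))) * θ s) = 1)
    (m : ℕ) (hm : 1 ≤ m) :
    (∫ x : ℝ, (x:ℂ)^m * θ x) = 0 := by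
  have htend : Filter.Tendsto (fun w : ℝ => 2 * π * w) (nhds 0) (nhds 0) := by
    have : Filter.Tendsto (fun w : ℝ => 2 * π * w) (nhds 0) (nhds (2 * π * 0)) :=
      (continuous_const.mul continuous_id).tendsto 0
    simpa using this
  have hev : 𝓕 (fun x : ℝ => (θ x : ℂ)) =ᶠ[nhds (0:ℝ)] (fun _ => (1:ℂ)) := by
    filter_upwards [htend.eventually hθhat1] with w hw
    rw [aux_fourier_rel]; exact hw
  have hconst : iteratedDeriv m (fun _ : ℝ => (1:ℂ)) 0 = 0 := by
    obtain ⟨k, rfl⟩ := Nat.exists_eq_add_of_le hm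
    clear hm
    rw [add_comm, iteratedDeriv_succ']
    simp only [deriv_const']
    induction k with
    | zero => simp [iteratedDeriv_zero]
    | succ k ih => rw [iteratedDeriv_succ', deriv_const']; exact ih
  have hzero : iteratedDeriv m (𝓕 (fun x : ℝ => (θ x : ℂ))) 0 = 0 :=
    (hev.iteratedDeriv_eq m).trans hconst
  have hint : ∀ (k : ℕ), (k : ℕ∞) ≤ (m : ℕ∞) → Integrable (fun x : ℝ => x ^ k • (θ x : ℂ)) := by
    intro k _
    have := aux_int_pow θ k
    simpa [real_smul, Complex.ofReal_pow] using this
  have hid := Real.iteratedDeriv_fourier (f := fun x : ℝ => (θ x : ℂ))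
      (N := (m : ℕ∞)) (n := m) hint le_rfl
  rw [hid] at hzero
  rw [Real.fourier_real_eq_integral_exp_smul] at hzero
  have : (∫ v : ℝ, (-2 * ↑π * I * ↑v) ^ m • (θ v : ℂ))
      = (-2 * ↑π * I) ^ m * ∫ x : ℝ, (x:ℂ)^m * θ x := by
    rw [← integral_const_mul]
    congr 1 with v
    rw [smul_eq_mul, mul_pow]
    ring
  simp only [mul_zero, Complex.ofReal_zero, zero_mul, Complex.exp_zero, one_smul] at hzero
  rw [this] at hzero
  rcases mul_eq_zero.1 hzero with h | h
  · exfalso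
    have : (-2 * (π:ℂ) * I) ≠ 0 := by
      simp [Complex.ext_iff, Real.pi_ne_zero]
    exact this (pow_eq_zero_iff (by omega)|>.1 h)
  · exact h
end MomentSection

lemma aux_taylor (M : ℕ) : ∀ (f : ℝ → ℂ), ContDiff ℝ ((⊤:ℕ∞) : WithTop ℕ∞) f → ∀ (B : ℝ),
    (∀ y : ℝ, ‖iteratedDeriv M f y‖ ≤ B) → ∀ a x : ℝ,
    ‖f x - ∑ m ∈ Finset.range M, ((x:ℂ) - (a:ℂ)) ^ m * (iteratedDeriv m f a / (m.factorial : ℂ))‖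
      ≤ B * |x - a| ^ M := by
  induction M with
  | zero =>
    intro f _ B hB a x
    simpa using hB x
  | succ M ih =>
    intro f hf B hB a x
    have hfd : Differentiable ℝ f := (contDiff_infty_iff_deriv.1 hf).1
    have hfd' : ContDiff ℝ ((⊤:ℕ∞) : WithTop ℕ∞) (deriv f) := (contDiff_infty_iff_deriv.1 hf).2
    set R : ℝ → ℂ := fun y =>
      f y - ∑ m ∈ Finset.range (M+1), ((y:ℂ) - (a:ℂ)) ^ m * (iteratedDeriv m f a / (m.factorial : ℂ)) with hR
    set D : ℝ → ℂ := fun y =>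
      deriv f y - ∑ m ∈ Finset.range M,
        ((y:ℂ) - (a:ℂ)) ^ m * (iteratedDeriv m (deriv f) a / (m.factorial : ℂ)) with hD
    have key : ∀ y : ℝ, HasDerivAt R (D y) y := by
      intro y
      have hbase : HasDerivAt (fun y : ℝ => ((y:ℂ) - (a:ℂ))) 1 y := by
        simpa using (Complex.ofRealCLM.hasDerivAt (x := y)).sub_const (a : ℂ)
      have hterm : ∀ m ∈ Finset.range (M+1), HasDerivAt
          (fun y : ℝ => ((y:ℂ) - (a:ℂ)) ^ m * (iteratedDeriv m f a / (m.factorial : ℂ)))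
          ((m : ℂ) * ((y:ℂ) - (a:ℂ)) ^ (m-1) * (iteratedDeriv m f a / (m.factorial : ℂ))) y := by
        intro m _
        have hp : HasDerivAt (fun y : ℝ => ((y:ℂ) - (a:ℂ)) ^ m)
            ((m:ℂ) * ((y:ℂ) - (a:ℂ))^(m-1)) y := by
          have := (hasDerivAt_pow m ((y:ℂ) - (a:ℂ))).comp y hbase
          simpa [Function.comp_def] using this
        exact hp.mul_const _
      have hsum := HasDerivAt.fun_sum hterm
      have hder : HasDerivAt R ((deriv f y) -
          ∑ m ∈ Finset.range (M+1),
            (m : ℂ) * ((y:ℂ) - (a:ℂ)) ^ (m-1) * (iteratedDeriv m f a / (m.factorial : ℂ))) y :=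
        ((hfd y).hasDerivAt).sub hsum
      convert hder using 2
      rw [Finset.sum_range_succ']
      simp only [Nat.cast_zero, zero_mul, add_zero, Nat.cast_add, Nat.cast_one,
        Nat.add_sub_cancel]
      refine Finset.sum_congr rfl fun m _ => ?_
      have hfac : (((m+1 : ℕ).factorial : ℕ) : ℂ) = ((m:ℂ) + 1) * ((m.factorial : ℕ) : ℂ) := by
        rw [Nat.factorial_succ]; push_cast; ring
      have hne1 : ((m:ℂ) + 1) ≠ 0 := by
        have h1 : ((m:ℂ) + 1) = ((m+1 : ℕ) : ℂ) := by push_cast; ring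
        rw [h1]
        exact_mod_cast (Nat.succ_ne_zero m)
      have hne2 : ((m.factorial : ℕ) : ℂ) ≠ 0 := Nat.cast_ne_zero.2 m.factorial_ne_zero
      rw [← iteratedDeriv_succ', hfac]
      field_simp
    -- bound on D on uIcc a x
    have hBnn : 0 ≤ B := le_trans (norm_nonneg _) (hB a)
    have hDb : ∀ y ∈ Set.uIcc a x, ‖deriv R y‖ ≤ B * |x - a| ^ M := by
      intro y hy
      rw [(key y).deriv]
      have h1 : ‖D y‖ ≤ B * |y - a| ^ M := by
        have hB' : ∀ z : ℝ, ‖iteratedDeriv M (deriv f) z‖ ≤ B := by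
          intro z; rw [← iteratedDeriv_succ']; exact hB z
        exact ih (deriv f) hfd' B hB' a y
      refine h1.trans ?_
      have : |y - a| ≤ |x - a| := by
        rcases le_total a x with hax | hax
        · rw [Set.uIcc_of_le hax] at hy
          rw [_root_.abs_of_nonneg (by linarith [hy.1]), _root_.abs_of_nonneg (by linarith [hy.1, hy.2])]
          linarith [hy.2]
        · rw [Set.uIcc_of_ge hax] at hy
          rw [_root_.abs_of_nonpos (by linarith [hy.2]), _root_.abs_of_nonpos (by linarith [hy.1, hy.2])]
          linarith [hy.1]
      exact mul_le_mul_of_nonneg_left (pow_le_pow_left₀ (abs_nonneg _) this M) hBnn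
    have hRa : R a = 0 := by
      rw [hR]
      simp only
      rw [Finset.sum_eq_single 0]
      · simp
      · intro m _ hm
        simp [sub_self, zero_pow hm]
      · simp
    have := Convex.norm_image_sub_le_of_norm_deriv_le
      (fun y _ => ((key y).differentiableAt)) hDb (convex_uIcc a x)
      (Set.left_mem_uIcc) (Set.right_mem_uIcc)
    rw [hRa, sub_zero] at this
    calc ‖R x‖ ≤ B * |x - a| ^ M * ‖x - a‖ := this
      _ = B * |x - a| ^ (M+1) := by rw [Real.norm_eq_abs, pow_succ]; ring

lemma aux_Qstep (Qh : ℝ → ℂ) (h ε : ℝ) (hh : 0 < h) (hε : 0 ≤ ε)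
    (hc : ∀ s : ℝ, ∀ u ∈ Set.Icc (0:ℝ) h, ‖Qh (s+u) - Qh s‖ ≤ ε) :
    ∀ s v : ℝ, ‖Qh s - Qh (s - v)‖ ≤ (1 + |v|/h) * ε := by
  have step : ∀ k : ℕ, ∀ s v : ℝ, 0 ≤ v → v ≤ k * h → ‖Qh (s + v) - Qh s‖ ≤ k * ε := by
    intro k
    induction k with
    | zero =>
      intro s v hv0 hvk
      have : v = 0 := le_antisymm (by simpa using hvk) hv0
      simp [this]
    | succ k ih =>
      intro s v hv0 hvk
      rcases le_or_gt v (k * h) with hle | hlt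
      · refine (ih s v hv0 hle).trans ?_
        have : (k:ℝ) ≤ (k:ℝ) + 1 := by linarith
        push_cast
        nlinarith
      · have hu0 : 0 ≤ v - k * h := le_of_lt (by linarith)
        have huh : v - k * h ≤ h := by
          push_cast at hvk
          linarith
        have h1 : ‖Qh (s + k * h + (v - k * h)) - Qh (s + k * h)‖ ≤ ε :=
          hc (s + k * h) _ ⟨hu0, huh⟩
        have h2 : ‖Qh (s + k * h) - Qh s‖ ≤ k * ε := by
          refine ih s (k * h) (by positivity) le_rfl
        have heq : s + k * h + (v - k * h) = s + v := by ring
        rw [heq] at h1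
        calc ‖Qh (s + v) - Qh s‖
            = ‖(Qh (s + v) - Qh (s + k * h)) + (Qh (s + k * h) - Qh s)‖ := by ring_nf
          _ ≤ ‖Qh (s + v) - Qh (s + k * h)‖ + ‖Qh (s + k * h) - Qh s‖ := norm_add_le _ _
          _ ≤ ε + k * ε := add_le_add h1 h2
          _ = (k + 1 : ℕ) * ε := by push_cast; ring
  have main : ∀ s v : ℝ, 0 ≤ v → ‖Qh (s + v) - Qh s‖ ≤ (1 + v/h) * ε := by
    intro s v hv
    set k : ℕ := ⌈v / h⌉₊ with hk
    have hvk : v ≤ k * h := by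
      have := Nat.le_ceil (v / h)
      calc v = (v / h) * h := by field_simp
        _ ≤ k * h := by
          apply mul_le_mul_of_nonneg_right this hh.le
    have hkb : (k : ℝ) ≤ v / h + 1 := (Nat.ceil_lt_add_one (by positivity)).le
    refine (step k s v hv hvk).trans ?_
    have : 0 ≤ v / h := by positivity
    nlinarith
  intro s v
  rcases le_or_gt 0 v with hv | hv
  · have := main (s - v) v hv
    rw [sub_add_cancel] at this
    simpa [abs_of_nonneg hv] using this
  · have := main s (-v) (by linarith)
    have heq : s + -v = s - v := by ring
    rw [heq] at this
    rw [norm_sub_rev] at this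
    simpa [abs_of_neg hv] using this

/-- **The Tauberian mollification step.**
Let `θ` be Schwartz with compactly supported Fourier transform equal to `1` near `0`, and
`θ_h(s) = h⁻¹θ(s/h)`. If `S_h` is smooth with derivative supported in a compact interval and
symbol-type bounds `|∂^k S_h| ≤ C_k h^{-n-1-k/2}`, and `Q_h` is bounded measurable with
`|Q_h(s+u) - Q_h(s)| ≤ ε(h)` for `u ∈ [0,h]`, then `S_h - S_h⋆θ_h = O(h^∞)` uniformly,
`|Q_h - Q_h⋆θ_h| ≤ C ε(h)` with `C = ∫ (1+|v|)|θ(v)| dv`, and hence the sum differs from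
its mollification by `O(h^N) + C ε(h)`. -/
theorem stmt8
    (n : ℕ) (J : Set ℝ) (hJ : IsCompact J) (hJint : ∃ p q : ℝ, J = Set.Icc p q)
    (θ : SchwartzMap ℝ ℂ)
    (hθhatc : HasCompactSupport
      (fun t : ℝ => ∫ s : ℝ, Complex.exp (-(Complex.I * Complex.ofReal (t * s))) * θ s))
    (hθhat1 : ∀ᶠ t in nhds (0:ℝ),
      (∫ s : ℝ, Complex.exp (-(Complex.I * Complex.ofReal (t * s))) * θ s) = 1)
    (S : ℝ → ℝ → ℂ)
    (hS : ∀ h ∈ Set.Ioc (0:ℝ) 1, ContDiff ℝ (⊤ : ℕ∞) (S h))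
    (hSsupp : ∀ h ∈ Set.Ioc (0:ℝ) 1, tsupport (deriv (S h)) ⊆ J)
    (hSbound : ∀ k : ℕ, ∃ Ck : ℝ, ∀ h ∈ Set.Ioc (0:ℝ) 1, ∀ s : ℝ,
      ‖iteratedDeriv k (S h) s‖ ≤ Ck * h ^ (-(n : ℝ) - 1 - (k : ℝ)/2))
    (Q : ℝ → ℝ → ℂ)
    (hQmeas : ∀ h ∈ Set.Ioc (0:ℝ) 1, Measurable (Q h))
    (hQbdd : ∀ h ∈ Set.Ioc (0:ℝ) 1, ∃ M : ℝ, ∀ s : ℝ, ‖Q h s‖ ≤ M)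
    (ε : ℝ → ℝ) (hε : ∀ h ∈ Set.Ioc (0:ℝ) 1, 0 ≤ ε h)
    (hQcont : ∀ h ∈ Set.Ioc (0:ℝ) 1, ∀ s : ℝ, ∀ u ∈ Set.Icc (0:ℝ) h,
      ‖Q h (s + u) - Q h s‖ ≤ ε h) :
    (∀ N : ℕ, ∃ C' : ℝ, ∀ h ∈ Set.Ioc (0:ℝ) 1, ∀ s : ℝ,
      ‖S h s - ∫ v : ℝ, S h (s - v) * (Complex.ofReal h⁻¹ * θ (v / h))‖ ≤ C' * h ^ N) ∧
    (∀ h ∈ Set.Ioc (0:ℝ) 1, ∀ s : ℝ,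
      ‖Q h s - ∫ v : ℝ, Q h (s - v) * (Complex.ofReal h⁻¹ * θ (v / h))‖ ≤
        (∫ v : ℝ, (1 + |v|) * ‖θ v‖) * ε h) ∧
    (∀ N : ℕ, ∃ C' : ℝ, ∀ h ∈ Set.Ioc (0:ℝ) 1, ∀ s : ℝ,
      ‖(S h s + Q h s) -
          ∫ v : ℝ, (S h (s - v) + Q h (s - v)) * (Complex.ofReal h⁻¹ * θ (v / h))‖ ≤
        C' * h ^ N + (∫ v : ℝ, (1 + |v|) * ‖θ v‖) * ε h) := by
  choose Cb hCb using hSbound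
  have hmom0 : (∫ x : ℝ, (θ x : ℂ)) = 1 := by simpa using hθhat1.self_of_nhds
  have hmom : ∀ m : ℕ, 1 ≤ m → (∫ x : ℝ, (x:ℂ)^m * θ x) = 0 := aux_moments θ hθhat1
  -- integrability of the two mollified integrands
  have hIntS : ∀ h ∈ Set.Ioc (0:ℝ) 1, ∀ s : ℝ,
      Integrable (fun v : ℝ => S h (s - v) * (Complex.ofReal h⁻¹ * θ (v / h))) := by
    intro h hh s
    have hne : h ≠ 0 := ne_of_gt hh.1
    have hθh : Integrable (fun v : ℝ => Complex.ofReal h⁻¹ * θ (v / h)) :=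
      (θ.integrable.const_mul _).comp_div hne
    refine hθh.bdd_mul (c := Cb 0 * h ^ (-(n : ℝ) - 1 - (0 : ℝ)/2)) ?_ ?_
    · exact ((hS h hh).continuous.comp (continuous_const.sub continuous_id)).aestronglyMeasurable
    · refine Filter.Eventually.of_forall fun v => ?_
      have := hCb 0 h hh (s - v)
      simpa [iteratedDeriv_zero] using this
  have hIntQ : ∀ h ∈ Set.Ioc (0:ℝ) 1, ∀ s : ℝ,
      Integrable (fun v : ℝ => Q h (s - v) * (Complex.ofReal h⁻¹ * θ (v / h))) := by
    intro h hh s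
    have hne : h ≠ 0 := ne_of_gt hh.1
    have hθh : Integrable (fun v : ℝ => Complex.ofReal h⁻¹ * θ (v / h)) :=
      (θ.integrable.const_mul _).comp_div hne
    obtain ⟨Mb, hMb⟩ := hQbdd h hh
    refine hθh.bdd_mul ?_ (Filter.Eventually.of_forall fun v => hMb _)
    exact ((hQmeas h hh).comp (measurable_const.sub measurable_id)).aestronglyMeasurable
  -- Part 1
  have P1 : ∀ N : ℕ, ∃ C' : ℝ, ∀ h ∈ Set.Ioc (0:ℝ) 1, ∀ s : ℝ,
      ‖S h s - ∫ v : ℝ, S h (s - v) * (Complex.ofReal h⁻¹ * θ (v / h))‖ ≤ C' * h ^ N := by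
    intro N
    set M : ℕ := 2*(N+n+1) with hMdef
    refine ⟨Cb M * (∫ u : ℝ, |u|^M * ‖θ u‖), ?_⟩
    intro h hh s
    have hh0 : 0 < h := hh.1
    have hne : h ≠ 0 := ne_of_gt hh0
    set B : ℝ := Cb M * h ^ (-(n : ℝ) - 1 - (M : ℝ)/2) with hBdef
    set T : ℝ → ℂ := fun v =>
      ∑ m ∈ Finset.range M, (-(v:ℂ))^m * (iteratedDeriv m (S h) s / (m.factorial : ℂ)) with hTdef
    -- integrability of each Taylor term against θh
    have hterm_int : ∀ m ∈ Finset.range M, Integrable (fun v : ℝ =>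
        ((-(v:ℂ))^m * (iteratedDeriv m (S h) s / (m.factorial : ℂ)))
          * (Complex.ofReal h⁻¹ * θ (v / h))) := by
      intro m _
      have := (aux_comp θ hh0 m).const_mul
        ((-1:ℂ)^m * (iteratedDeriv m (S h) s / (m.factorial : ℂ)))
      refine this.congr (Filter.Eventually.of_forall fun v => ?_)
      have hneg : (-(v:ℂ))^m = (-1:ℂ)^m * (v:ℂ)^m := by rw [← neg_one_mul, mul_pow]
      simp only [hneg]; ring
    have hTsum : (fun v : ℝ => T v * (Complex.ofReal h⁻¹ * θ (v / h)))
        = fun v : ℝ => ∑ m ∈ Finset.range M,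
            ((-(v:ℂ))^m * (iteratedDeriv m (S h) s / (m.factorial : ℂ)))
              * (Complex.ofReal h⁻¹ * θ (v / h)) := by
      funext v; rw [hTdef]; simp only; rw [Finset.sum_mul]
    have hTint : Integrable (fun v : ℝ => T v * (Complex.ofReal h⁻¹ * θ (v / h))) := by
      rw [hTsum]; exact integrable_finset_sum _ hterm_int
    -- value of the Taylor polynomial integral
    have hTval : (∫ v : ℝ, T v * (Complex.ofReal h⁻¹ * θ (v / h))) = S h s := by
      rw [hTsum, integral_finset_sum _ hterm_int]
      have hterm_val : ∀ m ∈ Finset.range M, (∫ v : ℝ,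
          ((-(v:ℂ))^m * (iteratedDeriv m (S h) s / (m.factorial : ℂ)))
            * (Complex.ofReal h⁻¹ * θ (v / h)))
          = ((-1:ℂ)^m * (iteratedDeriv m (S h) s / (m.factorial : ℂ)))
              * ((h:ℂ)^m * ∫ u : ℝ, (u:ℂ)^m * θ u) := by
        intro m _
        rw [← aux_val θ hh0 m, ← integral_const_mul]
        congr 1; funext v
        have hneg : (-(v:ℂ))^m = (-1:ℂ)^m * (v:ℂ)^m := by rw [← neg_one_mul, mul_pow]
        simp only [hneg]; ring
      rw [Finset.sum_congr rfl hterm_val]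
      rw [Finset.sum_eq_single 0]
      · simp [hmom0]
      · intro m _ hm
        rw [hmom m (Nat.one_le_iff_ne_zero.2 hm)]
        simp
      · intro habs
        exfalso
        exact habs (Finset.mem_range.2 (by omega))
    -- Taylor estimate
    have hTaylor : ∀ v : ℝ, ‖T v - S h (s - v)‖ ≤ B * |v|^M := by
      intro v
      have hB' : ∀ y : ℝ, ‖iteratedDeriv M (S h) y‖ ≤ B := fun y => hCb M h hh y
      have := aux_taylor M (S h) ((hS h hh).of_le (by simp)) B hB' s (s - v)
      have hpow : ∀ m : ℕ, (((s - v : ℝ):ℂ) - ((s:ℝ):ℂ))^m = (-(v:ℂ))^m := by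
        intro m; congr 1; push_cast; ring
      simp only [hpow] at this
      have habs : |s - v - s| = |v| := by
        rw [show s - v - s = -v by ring, abs_neg]
      rw [habs] at this
      rw [norm_sub_rev]
      exact this
    -- put everything together
    have key : S h s - (∫ v : ℝ, S h (s - v) * (Complex.ofReal h⁻¹ * θ (v / h)))
        = ∫ v : ℝ, (T v - S h (s - v)) * (Complex.ofReal h⁻¹ * θ (v / h)) := by
      rw [← hTval, ← integral_sub hTint (hIntS h hh s)]
      congr 1; funext v; ring
    rw [key]
    have hdiff : Integrable (fun v : ℝ => (T v - S h (s - v)) * (Complex.ofReal h⁻¹ * θ (v / h))) := by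
      refine (hTint.sub (hIntS h hh s)).congr (Filter.Eventually.of_forall fun v => ?_)
      simp only [Pi.sub_apply]; ring
    have hmono : ‖∫ v : ℝ, (T v - S h (s - v)) * (Complex.ofReal h⁻¹ * θ (v / h))‖
        ≤ ∫ v : ℝ, B * (|v|^M * ‖Complex.ofReal h⁻¹ * θ (v / h)‖) := by
      refine (norm_integral_le_integral_norm _).trans ?_
      refine integral_mono hdiff.norm
        ((aux_comp_real θ hh0 M).const_mul B) (fun v => ?_)
      rw [norm_mul]
      calc ‖T v - S h (s - v)‖ * ‖Complex.ofReal h⁻¹ * θ (v / h)‖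
          ≤ (B * |v|^M) * ‖Complex.ofReal h⁻¹ * θ (v / h)‖ :=
            mul_le_mul_of_nonneg_right (hTaylor v) (norm_nonneg _)
        _ = B * (|v|^M * ‖Complex.ofReal h⁻¹ * θ (v / h)‖) := by ring
    refine hmono.trans ?_
    rw [integral_const_mul, aux_norm_val θ hh0 M]
    rw [hBdef]
    have hrw : h ^ (-(n : ℝ) - 1 - (M : ℝ)/2) * h^M = h^N := by
      rw [← Real.rpow_natCast h M, ← Real.rpow_add hh0, ← Real.rpow_natCast h N]
      congr 1
      rw [hMdef]
      push_cast
      ring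
    refine le_of_eq ?_
    rw [← hrw]
    ring
  -- Part 2
  have P2 : ∀ h ∈ Set.Ioc (0:ℝ) 1, ∀ s : ℝ,
      ‖Q h s - ∫ v : ℝ, Q h (s - v) * (Complex.ofReal h⁻¹ * θ (v / h))‖ ≤
        (∫ v : ℝ, (1 + |v|) * ‖θ v‖) * ε h := by
    intro h hh s
    have hh0 : 0 < h := hh.1
    have hne : h ≠ 0 := ne_of_gt hh0
    have hθh : Integrable (fun v : ℝ => Complex.ofReal h⁻¹ * θ (v / h)) :=
      (θ.integrable.const_mul _).comp_div hne
    have hstep := aux_Qstep (Q h) h (ε h) hh0 (hε h hh) (hQcont h hh)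
    have hval0 : (∫ v : ℝ, Complex.ofReal h⁻¹ * θ (v / h)) = 1 := by
      have := aux_val θ hh0 0
      simpa [hmom0] using this
    have h1 : Q h s = ∫ v : ℝ, Q h s * (Complex.ofReal h⁻¹ * θ (v / h)) := by
      rw [integral_const_mul, hval0, mul_one]
    have key : Q h s - (∫ v : ℝ, Q h (s - v) * (Complex.ofReal h⁻¹ * θ (v / h)))
        = ∫ v : ℝ, (Q h s - Q h (s - v)) * (Complex.ofReal h⁻¹ * θ (v / h)) := by
      nth_rewrite 1 [h1]
      rw [← integral_sub (hθh.const_mul (Q h s)) (hIntQ h hh s)]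
      congr 1; funext v; ring
    rw [key]
    have hmono : ‖∫ v : ℝ, (Q h s - Q h (s - v)) * (Complex.ofReal h⁻¹ * θ (v / h))‖
        ≤ ∫ v : ℝ, ((1 + |v|/h) * ‖Complex.ofReal h⁻¹ * θ (v / h)‖) * ε h := by
      have hdiffQ : Integrable (fun v : ℝ =>
          (Q h s - Q h (s - v)) * (Complex.ofReal h⁻¹ * θ (v / h))) := by
        refine ((hθh.const_mul (Q h s)).sub (hIntQ h hh s)).congr
          (Filter.Eventually.of_forall fun v => ?_)
        simp only [Pi.sub_apply]; ring
      refine (norm_integral_le_integral_norm _).trans ?_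
      refine integral_mono hdiffQ.norm
        ((aux_q_int θ hh0).mul_const (ε h)) (fun v => ?_)
      rw [norm_mul]
      calc ‖Q h s - Q h (s - v)‖ * ‖Complex.ofReal h⁻¹ * θ (v / h)‖
          ≤ ((1 + |v|/h) * ε h) * ‖Complex.ofReal h⁻¹ * θ (v / h)‖ :=
            mul_le_mul_of_nonneg_right (hstep s v) (norm_nonneg _)
        _ = ((1 + |v|/h) * ‖Complex.ofReal h⁻¹ * θ (v / h)‖) * ε h := by ring
    refine hmono.trans ?_
    rw [integral_mul_const, aux_q_val θ hh0]
  refine ⟨P1, P2, fun N => ?_⟩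
  obtain ⟨C', hC'⟩ := P1 N
  refine ⟨C', fun h hh s => ?_⟩
  have hsplit : (∫ v : ℝ, (S h (s - v) + Q h (s - v)) * (Complex.ofReal h⁻¹ * θ (v / h)))
      = (∫ v : ℝ, S h (s - v) * (Complex.ofReal h⁻¹ * θ (v / h)))
        + ∫ v : ℝ, Q h (s - v) * (Complex.ofReal h⁻¹ * θ (v / h)) := by
    rw [← integral_add (hIntS h hh s) (hIntQ h hh s)]
    congr 1; funext v; ring
  rw [hsplit]
  calc ‖S h s + Q h s - ((∫ v : ℝ, S h (s - v) * (Complex.ofReal h⁻¹ * θ (v / h)))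
          + ∫ v : ℝ, Q h (s - v) * (Complex.ofReal h⁻¹ * θ (v / h)))‖
      = ‖(S h s - ∫ v : ℝ, S h (s - v) * (Complex.ofReal h⁻¹ * θ (v / h)))
          + (Q h s - ∫ v : ℝ, Q h (s - v) * (Complex.ofReal h⁻¹ * θ (v / h)))‖ := by
        congr 1; ring
    _ ≤ ‖S h s - ∫ v : ℝ, S h (s - v) * (Complex.ofReal h⁻¹ * θ (v / h))‖
          + ‖Q h s - ∫ v : ℝ, Q h (s - v) * (Complex.ofReal h⁻¹ * θ (v / h))‖ := norm_add_le _ _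
    _ ≤ C' * h ^ N + (∫ v : ℝ, (1 + |v|) * ‖θ v‖) * ε h := add_le_add (hC' h hh s) (P2 h hh s)
end
end

section
/- Let ε₀ > 0 and let x, ρ : [0,∞) → ℝ be differentiable functions with x(t) > 0 for all t ≥ 0, satisfying x'(t) = ρ(t) x(t)² and ρ'(t) ≤ −1/(2 x(t)) for all t ≥ 0, with x(0) ≤ ε₀ and ρ(0) ≤ 0. Then for all t ≥ 0: x is nonincreasing (so x(t) ≤ ε₀), ρ(t) ≤ −t/(2ε₀), and x(t) ≤ ε₀ / (1 + t²/4). -/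
/-!
Since `ρ' < 0` and `ρ(0) ≤ 0`, `ρ` stays nonpositive, so `x' = ρ x² ≤ 0` and `x ≤ ε₀`. Then
`ρ' ≤ -1/(2x) ≤ -1/(2ε₀)` integrates to `ρ(t) ≤ -t/(2ε₀)`. Finally `u = 1/x` satisfies
`u' = -ρ ≥ t/(2ε₀)`, so `u(t) ≥ 1/ε₀ + t²/(4ε₀)`, which is the bound on `x`.
-/

open Set

section Comparison

variable {a : ℝ} {f g f' g' : ℝ → ℝ}

theorem antitoneOn_Ici_of_hasDerivWithinAt_nonpos
    (hf : ∀ t, a ≤ t → HasDerivWithinAt f (f' t) (Ici a) t) (hf' : ∀ t, a < t → f' t ≤ 0) :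
    AntitoneOn f (Ici a) := by
  refine antitoneOn_of_hasDerivWithinAt_nonpos (f' := f') (convex_Ici a)
    (fun t ht => (hf t ht).continuousWithinAt) (fun t ht => ?_) (fun t ht => ?_)
  · rw [interior_Ici] at ht ⊢
    exact (hf t ht.le).mono Ioi_subset_Ici_self
  · exact hf' t (by rwa [interior_Ici] at ht)

theorem le_of_hasDerivWithinAt_Ici_le
    (hf : ∀ t, a ≤ t → HasDerivWithinAt f (f' t) (Ici a) t)
    (hg : ∀ t, a ≤ t → HasDerivWithinAt g (g' t) (Ici a) t)
    (hfg' : ∀ t, a < t → f' t ≤ g' t) (hfg : f a ≤ g a) {t : ℝ} (ht : a ≤ t) : f t ≤ g t := by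
  have hanti : AntitoneOn (f - g) (Ici a) :=
    antitoneOn_Ici_of_hasDerivWithinAt_nonpos (fun s hs => (hf s hs).sub (hg s hs))
      fun s hs => sub_nonpos.2 (hfg' s hs)
  have := hanti self_mem_Ici ht ht
  simp only [Pi.sub_apply] at this
  linarith

end Comparison

theorem HasDerivWithinAt.inv_of_eq_mul_sq {x : ℝ → ℝ} {ρ : ℝ} {s : Set ℝ} {t : ℝ}
    (hx : HasDerivWithinAt x (ρ * x t ^ 2) s t) (ht : x t ≠ 0) :
    HasDerivWithinAt x⁻¹ (-ρ) s t := by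
  simpa only [neg_div, mul_div_cancel_right₀ _ (pow_ne_zero 2 ht)] using hx.inv ht

theorem stmt9_general (ε₀ : ℝ) (x ρ ρ' : ℝ → ℝ)
    (hxpos : ∀ t : ℝ, 0 ≤ t → 0 < x t)
    (hx' : ∀ t : ℝ, 0 ≤ t → HasDerivWithinAt x (ρ t * (x t) ^ 2) (Set.Ici 0) t)
    (hρ' : ∀ t : ℝ, 0 ≤ t → HasDerivWithinAt ρ (ρ' t) (Set.Ici 0) t)
    (hρ'le : ∀ t : ℝ, 0 ≤ t → ρ' t ≤ -(1 / (2 * x t)))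
    (hx0 : x 0 ≤ ε₀) (hρ0 : ρ 0 ≤ 0) :
    AntitoneOn x (Set.Ici 0) ∧
      ∀ t : ℝ, 0 ≤ t → x t ≤ ε₀ ∧ ρ t ≤ -(t / (2 * ε₀)) ∧ x t ≤ ε₀ / (1 + t ^ 2 / 4) := by
  have hε₀ : 0 < ε₀ := (hxpos 0 le_rfl).trans_le hx0
  have hρ_anti : AntitoneOn ρ (Ici 0) :=
    antitoneOn_Ici_of_hasDerivWithinAt_nonpos hρ' fun t ht =>
      (hρ'le t ht.le).trans (neg_nonpos.2 (by have := hxpos t ht.le; positivity))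
  have hx_anti : AntitoneOn x (Ici 0) :=
    antitoneOn_Ici_of_hasDerivWithinAt_nonpos hx' fun t ht =>
      mul_nonpos_of_nonpos_of_nonneg ((hρ_anti self_mem_Ici ht.le ht.le).trans hρ0) (sq_nonneg _)
  have hx_le (t : ℝ) (ht : 0 ≤ t) : x t ≤ ε₀ := (hx_anti self_mem_Ici ht ht).trans hx0
  have hρ_le (t : ℝ) (ht : 0 ≤ t) : ρ t ≤ -(t / (2 * ε₀)) :=
    le_of_hasDerivWithinAt_Ici_le hρ'
      (fun s _ => ((hasDerivWithinAt_id s _).div_const _).neg)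
      (fun s hs => (hρ'le s hs.le).trans (neg_le_neg (one_div_le_one_div_of_le
        (by have := hxpos s hs.le; positivity) (by linarith [hx_le s hs.le]))))
      (by simpa using hρ0) ht
  refine ⟨hx_anti, fun t ht => ⟨hx_le t ht, hρ_le t ht, ?_⟩⟩
  have hinv_ge : (1 + t ^ 2 / 4) / ε₀ ≤ x⁻¹ t :=
    le_of_hasDerivWithinAt_Ici_le (f' := fun s => s / (2 * ε₀))
      (fun s _ => ((((hasDerivWithinAt_pow 2 s).div_const 4).const_add 1).div_const ε₀).congr_deriv
        (by field_simp; ring))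
      (fun s hs => (hx' s hs).inv_of_eq_mul_sq (hxpos s hs).ne')
      (fun s hs => by linarith [hρ_le s hs.le])
      (by simpa using inv_anti₀ (hxpos 0 le_rfl) hx0)
      ht
  rwa [Pi.inv_apply, le_inv_comm₀ (by positivity) (hxpos t ht), inv_div] at hinv_ge

/-- **The ODE core of the convergence of geodesics to the boundary at infinity.**
If `x > 0`, `x' = ρ x²`, `ρ' ≤ -1/(2x)` on `[0,∞)`, `x(0) ≤ ε₀` and `ρ(0) ≤ 0`, then `x`
is nonincreasing, `ρ(t) ≤ -t/(2ε₀)`, and `x(t) ≤ ε₀/(1+t²/4)`. -/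
theorem stmt9 (ε₀ : ℝ) (hε₀ : 0 < ε₀) (x ρ ρ' : ℝ → ℝ)
    (hxpos : ∀ t : ℝ, 0 ≤ t → 0 < x t)
    (hx' : ∀ t : ℝ, 0 ≤ t → HasDerivWithinAt x (ρ t * (x t) ^ 2) (Set.Ici 0) t)
    (hρ' : ∀ t : ℝ, 0 ≤ t → HasDerivWithinAt ρ (ρ' t) (Set.Ici 0) t)
    (hρ'le : ∀ t : ℝ, 0 ≤ t → ρ' t ≤ -(1 / (2 * x t)))
    (hx0 : x 0 ≤ ε₀) (hρ0 : ρ 0 ≤ 0) :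
    AntitoneOn x (Set.Ici 0) ∧
      ∀ t : ℝ, 0 ≤ t → x t ≤ ε₀ ∧ ρ t ≤ -(t / (2 * ε₀)) ∧ x t ≤ ε₀ / (1 + t ^ 2 / 4) :=
  stmt9_general ε₀ x ρ ρ' hxpos hx' hρ' hρ'le hx0 hρ0
end

section
/- Let n ≥ 1 and ε > 0, and let a : [0,ε) × ℝⁿ → (real symmetric n×n matrices) be a smooth map such that each a(x,y) is positive definite, and suppose there are constants C₀, C₁ > 0 with ⟨a(x,y)θ, θ⟩ ≤ C₁|θ|² and |⟨∂_x a(x,y) θ, θ⟩| ≤ 2C₀ ⟨a(x,y)θ, θ⟩ for all (x,y) ∈ [0,ε)×ℝⁿ and all θ ∈ ℝⁿ. Set p(x,y,ρ,θ) = x² (ρ² + ⟨a(x,y)θ, θ⟩) and ε₀ = min(ε/2, 1/(2C₀)). Then there is a constant C, depending only on C₁ and ε₀, such that: for every C¹ curve (x(t), y(t), ρ(t), θ(t)) : [0,∞) → (0,ε)×ℝⁿ×ℝ×ℝⁿ solving the Hamilton equations of p/2, namely x' = x²ρ, y' = x² a(x,y)θ, ρ' = −x(ρ² + ⟨a(x,y)θ,θ⟩)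 − (x²/2)⟨∂_x a(x,y)θ, θ⟩, θ' = −(x²/2) ∇_y ⟨a(x,y)θ, θ⟩, and satisfying p(x(t),y(t),ρ(t),θ(t)) = 1 for all t ≥ 0, x(0) ≤ ε₀ and ρ(0) ≤ 0, one has for all t ≥ 0: x'(t) ≤ 0, ρ(t) ≤ −t/(2ε₀), x(t) ≤ ε₀/(1+t²/4), and there exists y_∞ ∈ ℝⁿ with |y(t) − y_∞| ≤ C/t for all t > 0. -/
open Set Filter

noncomputable section

attribute [local instance] Matrix.normedAddCommGroup Matrix.normedSpace

/-- The quadratic form `⟨Aθ, θ⟩ = ∑ᵢⱼ Aᵢⱼ θᵢ θⱼ` of a matrix. -/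
def qf {n : ℕ} (A : Matrix (Fin n) (Fin n) ℝ) (θ : EuclideanSpace ℝ (Fin n)) : ℝ :=
  ∑ i, ∑ j, A i j * θ i * θ j

lemma qf_nonneg {n : ℕ} {A : Matrix (Fin n) (Fin n) ℝ} (hp : A.PosSemidef)
    (θ : EuclideanSpace ℝ (Fin n)) : 0 ≤ qf A θ := by
  have h := hp.dotProduct_mulVec_nonneg (fun i => θ i)
  simp only [star_trivial, dotProduct, Matrix.mulVec, dotProduct] at h
  calc (0:ℝ) ≤ ∑ i, θ i * ∑ j, A i j * θ j := h
    _ = qf A θ := by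
        unfold qf
        refine Finset.sum_congr rfl fun i _ => ?_
        rw [Finset.mul_sum]
        exact Finset.sum_congr rfl fun j _ => by ring

lemma qf_add_smul {n : ℕ} {A : Matrix (Fin n) (Fin n) ℝ} (hA : A.IsSymm)
    (θ η : EuclideanSpace ℝ (Fin n)) (c : ℝ) :
    qf A (θ + c • η) = qf A θ + 2 * c * (∑ i, ∑ j, A i j * θ i * η j) + c ^ 2 * qf A η := by
  have expand : qf A (θ + c • η)
      = ∑ i, ∑ j, (A i j * θ i * θ j + c * (A i j * θ i * η j)
          + c * (A i j * η i * θ j) + c ^ 2 * (A i j * η i * η j)) := by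
    unfold qf
    refine Finset.sum_congr rfl fun i _ => Finset.sum_congr rfl fun j _ => ?_
    have h1 : (θ + c • η) i = θ i + c * η i := rfl
    have h2 : (θ + c • η) j = θ j + c * η j := rfl
    rw [h1, h2]; ring
  have swap : (∑ i, ∑ j, A i j * η i * θ j) = ∑ i, ∑ j, A i j * θ i * η j := by
    rw [Finset.sum_comm]
    refine Finset.sum_congr rfl fun j _ => Finset.sum_congr rfl fun i _ => ?_
    rw [hA.apply]; ring
  simp only [expand, Finset.sum_add_distrib, ← Finset.mul_sum]
  rw [swap]; unfold qf; ring

lemma mulVec_sq_le {n : ℕ} {A : Matrix (Fin n) (Fin n) ℝ} (hs : A.IsSymm)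
    (hp : A.PosSemidef) {C₁ : ℝ} (hC : 0 < C₁)
    (hb : ∀ v : EuclideanSpace ℝ (Fin n), qf A v ≤ C₁ * ‖v‖ ^ 2)
    (θ : EuclideanSpace ℝ (Fin n)) :
    ∑ i, (∑ j, A i j * θ j) ^ 2 ≤ C₁ * qf A θ := by
  set w : EuclideanSpace ℝ (Fin n) := WithLp.toLp 2 (fun i => ∑ j, A i j * θ j) with hw
  have hwnorm : ‖w‖ ^ 2 = ∑ i, (w i) ^ 2 := by
    rw [EuclideanSpace.norm_eq, Real.sq_sqrt]
    · simp [Real.norm_eq_abs, sq_abs]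
    · positivity
  have hbl : (∑ i, ∑ j, A i j * θ i * w j) = ∑ i, (w i) ^ 2 := by
    rw [Finset.sum_comm]
    refine Finset.sum_congr rfl fun j _ => ?_
    have : ∑ i, A i j * θ i * w j = (∑ i, A j i * θ i) * w j := by
      rw [Finset.sum_mul]
      exact Finset.sum_congr rfl fun i _ => by rw [hs.apply]
    rw [this]
    have h2 : (∑ i, A j i * θ i) = w j := rfl
    rw [h2, sq]
  have h0 : 0 ≤ qf A (θ + (-(1/C₁)) • w) := qf_nonneg hp _
  rw [qf_add_smul hs, hbl] at h0
  have hqw : qf A w ≤ C₁ * ∑ i, (w i) ^ 2 := by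
    calc qf A w ≤ C₁ * ‖w‖ ^ 2 := hb w
      _ = C₁ * ∑ i, (w i) ^ 2 := by rw [hwnorm]
  have hS : 0 ≤ ∑ i, (w i) ^ 2 := Finset.sum_nonneg fun i _ => sq_nonneg _
  have h1 : (1/C₁)^2 * qf A w ≤ (1/C₁)^2 * (C₁ * ∑ i, (w i) ^ 2) :=
    mul_le_mul_of_nonneg_left hqw (by positivity)
  have h2 : (1/C₁)^2 * (C₁ * ∑ i, (w i) ^ 2) = (∑ i, (w i) ^ 2) / C₁ := by
    field_simp
  have h3 : (∑ i, (w i) ^ 2) / C₁ ≤ qf A θ := by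
    have hh : 2 * -(1 / C₁) * ∑ i, (w i) ^ 2 = -(2 * ((∑ i, (w i) ^ 2) / C₁)) := by
      field_simp
    rw [hh] at h0
    linarith [h1, h2.le, h2.ge, h0]
  calc ∑ i, (∑ j, A i j * θ j) ^ 2 = ∑ i, (w i)^2 := rfl
    _ ≤ qf A θ * C₁ := (div_le_iff₀ hC).mp h3
    _ = C₁ * qf A θ := mul_comm _ _

lemma eventually_neg_right {f : ℝ → ℝ} {d T : ℝ}
    (hd : HasDerivWithinAt f d (Ioi T) T)
    (h : f T < 0 ∨ (f T ≤ 0 ∧ d < 0)) : ∀ᶠ t in nhdsWithin T (Ioi T), f t < 0 := by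
  rcases h with h | ⟨hfT, hdneg⟩
  · exact hd.continuousWithinAt.eventually_lt_const h
  · have hslope : Tendsto (slope f T) (nhdsWithin T (Ioi T)) (nhds d) := by
      have := hasDerivWithinAt_iff_tendsto_slope.mp hd
      rwa [Set.diff_singleton_eq_self (notMem_Ioi.mpr le_rfl)] at this
    have hev : ∀ᶠ t in nhdsWithin T (Ioi T), slope f T t < 0 :=
      hslope.eventually_lt_const hdneg
    filter_upwards [hev, self_mem_nhdsWithin] with t ht htT
    rw [slope_def_field, div_neg_iff] at ht
    rcases ht with ⟨_, h2⟩ | ⟨h1, _⟩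
    · linarith [sub_pos.mpr (mem_Ioi.mp htT)]
    · linarith

lemma arctan_le_self' {u : ℝ} (hu : 0 ≤ u) : Real.arctan u ≤ u := by
  rcases eq_or_lt_of_le hu with h | h
  · simp [← h]
  · have h1 : 0 < Real.arctan u := by
      have := Real.arctan_strictMono h
      rwa [Real.arctan_zero] at this
    have h2 : Real.arctan u < Real.pi / 2 := Real.arctan_lt_pi_div_two u
    have h3 := Real.lt_tan h1 h2
    rw [Real.tan_arctan] at h3
    exact h3.le

set_option maxHeartbeats 1600000 in
/-- **Convergence of directly escaping geodesics on asymptotically hyperbolic manifolds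
(Lemma 6.1 in a boundary collar chart).** For the Hamiltonian
`p = x²(ρ² + ⟨a(x,y)θ,θ⟩)` with `a` smooth, symmetric positive definite, `⟨aθ,θ⟩ ≤ C₁|θ|²`
and `|⟨∂ₓa θ,θ⟩| ≤ 2C₀⟨aθ,θ⟩`, every unit-speed trajectory starting with `x(0) ≤ ε₀` and
`ρ(0) ≤ 0` keeps `x` nonincreasing, satisfies `ρ(t) ≤ -t/(2ε₀)` and `x(t) ≤ ε₀/(1+t²/4)`,
and its boundary coordinate `y(t)` converges at rate `C/t`, with `C` depending only on
`C₁` and `ε₀ = min(ε/2, 1/(2C₀))`. -/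
theorem stmt10 (C₁ e₀ : ℝ) (hC₁ : 0 < C₁) (he₀ : 0 < e₀) :
    ∃ C : ℝ, ∀ (n : ℕ), 1 ≤ n → ∀ (ε C₀ : ℝ), 0 < ε → 0 < C₀ →
    e₀ = min (ε / 2) (1 / (2 * C₀)) →
    ∀ (a a' : ℝ → EuclideanSpace ℝ (Fin n) → Matrix (Fin n) (Fin n) ℝ),
    ContDiffOn ℝ (⊤ : ℕ∞) (fun p : ℝ × EuclideanSpace ℝ (Fin n) => a p.1 p.2)
      (Set.Ico 0 ε ×ˢ Set.univ) →
    (∀ x ∈ Set.Ico (0:ℝ) ε, ∀ y, (a x y).IsSymm ∧ (a x y).PosDef) →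
    (∀ x ∈ Set.Ico (0:ℝ) ε, ∀ y,
      HasDerivWithinAt (fun s => a s y) (a' x y) (Set.Ico 0 ε) x) →
    (∀ x ∈ Set.Ico (0:ℝ) ε, ∀ y θ, qf (a x y) θ ≤ C₁ * ‖θ‖ ^ 2) →
    (∀ x ∈ Set.Ico (0:ℝ) ε, ∀ y θ, |qf (a' x y) θ| ≤ 2 * C₀ * qf (a x y) θ) →
    ∀ (x ρ : ℝ → ℝ) (y θ : ℝ → EuclideanSpace ℝ (Fin n)),
    (∀ t : ℝ, 0 ≤ t → 0 < x t ∧ x t < ε) →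
    (∀ t : ℝ, 0 ≤ t → HasDerivWithinAt x ((x t) ^ 2 * ρ t) (Set.Ici 0) t) →
    (∀ t : ℝ, 0 ≤ t → ∀ i, HasDerivWithinAt (fun s => y s i)
        ((x t) ^ 2 * ∑ j, a (x t) (y t) i j * θ t j) (Set.Ici 0) t) →
    (∀ t : ℝ, 0 ≤ t → HasDerivWithinAt ρ
        (-(x t) * ((ρ t) ^ 2 + qf (a (x t) (y t)) (θ t))
          - (x t) ^ 2 / 2 * qf (a' (x t) (y t)) (θ t)) (Set.Ici 0) t) →
    (∀ t : ℝ, 0 ≤ t → ∀ i, HasDerivWithinAt (fun s => θ s i)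
        (-(x t) ^ 2 / 2 *
          fderiv ℝ (fun y' => qf (a (x t) y') (θ t)) (y t) (EuclideanSpace.single i 1))
        (Set.Ici 0) t) →
    (∀ t : ℝ, 0 ≤ t → (x t) ^ 2 * ((ρ t) ^ 2 + qf (a (x t) (y t)) (θ t)) = 1) →
    x 0 ≤ e₀ → ρ 0 ≤ 0 →
    (∀ t : ℝ, 0 ≤ t →
        derivWithin x (Set.Ici 0) t ≤ 0 ∧ ρ t ≤ -(t / (2 * e₀)) ∧
          x t ≤ e₀ / (1 + t ^ 2 / 4)) ∧
      ∃ ylim : EuclideanSpace ℝ (Fin n), ∀ t : ℝ, 0 < t → ‖y t - ylim‖ ≤ C / t := by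
  refine ⟨4 * Real.sqrt C₁ * e₀, ?_⟩
  intro n hn ε C₀ hε hC₀ he a a' hsmooth hsympd ha'd haC₁ haC₀ x ρ y θ hx hxd hyd hρd hθd
    hunit hx0 hρ0
  -- basic constants
  have he₀C : C₀ ≤ 1 / (2 * e₀) := by
    have h1 : e₀ ≤ 1 / (2 * C₀) := he ▸ min_le_right _ _
    rw [le_div_iff₀ (by positivity)] at h1 ⊢
    nlinarith
  have hxm : ∀ t, 0 ≤ t → x t ∈ Set.Ico (0:ℝ) ε := fun t ht => ⟨(hx t ht).1.le, (hx t ht).2⟩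
  have hq0 : ∀ t, 0 ≤ t → 0 ≤ qf (a (x t) (y t)) (θ t) := fun t ht =>
    qf_nonneg ((hsympd _ (hxm t ht) _).2.posSemidef) _
  have hx2q : ∀ t, 0 ≤ t → (x t) ^ 2 * qf (a (x t) (y t)) (θ t) ≤ 1 := by
    intro t ht
    have h := hunit t ht
    nlinarith [sq_nonneg (x t * ρ t)]
  -- the value of ρ'
  set D : ℝ → ℝ := fun t => -(x t) * ((ρ t) ^ 2 + qf (a (x t) (y t)) (θ t))
      - (x t) ^ 2 / 2 * qf (a' (x t) (y t)) (θ t) with hD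
  have hDle : ∀ t, 0 ≤ t → D t ≤ -(1 / x t) + C₀ := by
    intro t ht
    have hxt : 0 < x t := (hx t ht).1
    have h1 : x t * ((ρ t) ^ 2 + qf (a (x t) (y t)) (θ t)) = 1 / x t := by
      rw [eq_div_iff hxt.ne']
      linear_combination hunit t ht
    have h2 := abs_le.mp (haC₀ _ (hxm t ht) (y t) (θ t))
    have h3 : (x t) ^ 2 / 2 * qf (a' (x t) (y t)) (θ t) ≥ -((x t)^2 * C₀ * qf (a (x t) (y t)) (θ t)) := by
      nlinarith [h2.1, sq_nonneg (x t)]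
    have h4 : (x t)^2 * C₀ * qf (a (x t) (y t)) (θ t) ≤ C₀ := by
      nlinarith [hx2q t ht, hq0 t ht, sq_nonneg (x t)]
    simp only [hD]
    rw [← h1]
    nlinarith [h3, h4]
  have hDneg : ∀ t, 0 ≤ t → x t ≤ e₀ → D t ≤ -(1 / (2 * e₀)) := by
    intro t ht hxe
    have hxt : 0 < x t := (hx t ht).1
    have : 1 / e₀ ≤ 1 / x t := one_div_le_one_div_of_le hxt hxe
    have h5 : 1 / (2 * e₀) = 1 / e₀ - 1 / (2 * e₀) := by field_simp; ring
    calc D t ≤ -(1 / x t) + C₀ := hDle t ht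
      _ ≤ -(1 / e₀) + 1 / (2 * e₀) := by linarith [he₀C]
      _ = -(1 / (2 * e₀)) := by field_simp; ring
  -- key comparison for ρ
  have keyρ : ∀ T, 0 ≤ T → (∀ s, 0 ≤ s → s ≤ T → x s ≤ e₀) →
      ∀ s, 0 ≤ s → s ≤ T → ρ s ≤ ρ 0 - s / (2 * e₀) := by
    intro T hT hxle s hs hsT
    have := image_le_of_deriv_right_le_deriv_boundary (f := ρ) (f' := D) (a := 0) (b := T)
      (B := fun s => ρ 0 - s / (2 * e₀)) (B' := fun _ => -(1 / (2 * e₀)))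
      (fun u hu => ((hρd u hu.1).continuousWithinAt).mono (fun v hv => hv.1))
      (fun u hu => (hρd u hu.1).mono (fun v hv => le_trans hu.1 hv))
      (by simp)
      (by fun_prop)
      (fun u hu => (((hasDerivAt_id u).div_const (2 * e₀)).const_sub (ρ 0)).hasDerivWithinAt)
      (fun u hu => hDneg u hu.1 (hxle u hu.1 hu.2.le))
    exact this (⟨hs, hsT⟩ : s ∈ Icc 0 T)
  -- key comparison for x
  have keyx : ∀ T, 0 ≤ T → (∀ s, 0 ≤ s → s ≤ T → ρ s ≤ 0) →
      ∀ s, 0 ≤ s → s ≤ T → x s ≤ x 0 := by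
    intro T hT hρle s hs hsT
    have := image_le_of_deriv_right_le_deriv_boundary (f := x)
      (f' := fun s => (x s) ^ 2 * ρ s) (a := 0) (b := T)
      (B := fun _ => x 0) (B' := fun _ => 0)
      (fun u hu => ((hxd u hu.1).continuousWithinAt).mono (fun v hv => hv.1))
      (fun u hu => (hxd u hu.1).mono (fun v hv => le_trans hu.1 hv))
      le_rfl
      continuousOn_const
      (fun u hu => (hasDerivAt_const u (x 0)).hasDerivWithinAt)
      (fun u hu => mul_nonpos_of_nonneg_of_nonpos (sq_nonneg _) (hρle u hu.1 hu.2.le))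
    exact this (⟨hs, hsT⟩ : s ∈ Icc 0 T)
  -- bootstrap
  have hbound : ∀ t, 0 ≤ t → x t ≤ e₀ := by
    by_contra hcon
    push_neg at hcon
    obtain ⟨t₀, ht₀, hxt₀⟩ := hcon
    set S := {t : ℝ | 0 ≤ t ∧ e₀ < x t} with hS
    have hSne : S.Nonempty := ⟨t₀, ht₀, hxt₀⟩
    have hSbdd : BddBelow S := ⟨0, fun s hs => hs.1⟩
    set T := sInf S with hT
    have hT0 : 0 ≤ T := le_csInf hSne fun s hs => hs.1
    have hbefore : ∀ s, 0 ≤ s → s < T → x s ≤ e₀ := by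
      intro s hs hsT
      by_contra hh
      push_neg at hh
      exact absurd (csInf_le hSbdd ⟨hs, hh⟩) (not_le.mpr hsT)
    have hxT : x T ≤ e₀ := by
      rcases eq_or_lt_of_le hT0 with h | h
      · rw [← h]; exact hx0
      · have hcw : ContinuousWithinAt x (Set.Ico 0 T) T :=
          ((hxd T hT0).continuousWithinAt).mono fun v hv => hv.1
        have hmem : T ∈ closure (Set.Ico (0:ℝ) T) := by
          rw [closure_Ico h.ne]
          exact ⟨hT0, le_rfl⟩
        have hne : (nhdsWithin T (Set.Ico (0:ℝ) T)).NeBot :=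
          mem_closure_iff_nhdsWithin_neBot.mp hmem
        exact le_of_tendsto hcw
          (eventually_nhdsWithin_of_forall fun s hs => hbefore s hs.1 hs.2)
    have hxle : ∀ s, 0 ≤ s → s ≤ T → x s ≤ e₀ := by
      intro s hs hsT
      rcases lt_or_eq_of_le hsT with h | h
      · exact hbefore s hs h
      · rw [h]; exact hxT
    have hρle : ∀ s, 0 ≤ s → s ≤ T → ρ s ≤ ρ 0 - s / (2 * e₀) := keyρ T hT0 hxle
    have hev : ∀ᶠ t in nhdsWithin T (Set.Ioi T), ρ t < 0 := by
      refine eventually_neg_right ((hρd T hT0).mono fun v hv => le_trans hT0 (le_of_lt hv)) ?_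
      rcases lt_or_ge (ρ T) 0 with h | h
      · exact Or.inl h
      · refine Or.inr ⟨?_, ?_⟩
        · have := hρle T hT0 le_rfl
          have h2 : 0 ≤ T / (2 * e₀) := by positivity
          linarith
        · have h5 := hDneg T hT0 hxT
          have h3 : 0 < 1 / (2 * e₀) := by positivity
          show D T < 0
          exact lt_of_le_of_lt h5 (neg_neg_of_pos h3)
    obtain ⟨u, hu, hsub⟩ := mem_nhdsGT_iff_exists_Ioo_subset.mp hev
    obtain ⟨s, hsS, hsu⟩ := (csInf_lt_iff hSbdd hSne).mp (mem_Ioi.mp hu)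
    have hsT : T ≤ s := csInf_le hSbdd hsS
    have hρs : ∀ σ, 0 ≤ σ → σ ≤ s → ρ σ ≤ 0 := by
      intro σ hσ hσs
      rcases le_or_gt σ T with h | h
      · have := hρle σ hσ h
        have h2 : 0 ≤ σ / (2 * e₀) := by positivity
        linarith
      · exact (hsub ⟨h, lt_of_le_of_lt hσs hsu⟩).le
    have := keyx s hsS.1 hρs s hsS.1 le_rfl
    have := hsS.2
    linarith
  -- global ρ bound
  have hρglob : ∀ t, 0 ≤ t → ρ t ≤ ρ 0 - t / (2 * e₀) := fun t ht =>
    keyρ t ht (fun s hs _ => hbound s hs) t ht le_rfl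
  have hρneg : ∀ t, 0 ≤ t → ρ t ≤ -(t / (2 * e₀)) := by
    intro t ht
    have := hρglob t ht
    linarith
  -- quadratic decay of x
  have hxquad : ∀ t, 0 ≤ t → x t ≤ e₀ / (1 + t ^ 2 / 4) := by
    intro t ht
    have key := image_le_of_deriv_right_le_deriv_boundary (f := fun s => -(x s)⁻¹)
      (f' := ρ) (a := 0) (b := t)
      (B := fun s => -(1/e₀) - s ^ 2 / (4 * e₀)) (B' := fun s => -(s / (2 * e₀)))
      (fun u hu => (((hxd u hu.1).continuousWithinAt).mono (fun v hv => hv.1)).inv₀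
        (hx u hu.1).1.ne' |>.neg)
      (fun u hu => by
        have h1 := (((hxd u hu.1).mono (fun v hv => le_trans hu.1 hv)).inv
          (hx u hu.1).1.ne').neg
        have hxu : x u ≠ 0 := (hx u hu.1).1.ne'
        rw [show -(-(x u ^ 2 * ρ u) / x u ^ 2) = ρ u by field_simp] at h1
        exact h1)
      (by
        show -(x 0)⁻¹ ≤ -(1/e₀) - (0:ℝ) ^ 2 / (4 * e₀)
        have h1 : 1 / e₀ ≤ 1 / x 0 := one_div_le_one_div_of_le (hx 0 le_rfl).1 hx0
        have h2 : (0:ℝ) ^ 2 / (4 * e₀) = 0 := by norm_num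
        rw [h2]
        simp only [one_div] at h1 ⊢
        linarith)
      (by fun_prop)
      (fun u hu => by
        have h1 : HasDerivAt (fun s : ℝ => -(1/e₀) - s ^ 2 / (4 * e₀))
            (-((2 : ℕ) * u ^ 1 / (4 * e₀))) u :=
          ((hasDerivAt_pow 2 u).div_const (4 * e₀)).const_sub (-(1/e₀))
        have h2 : -((2 : ℕ) * u ^ 1 / (4 * e₀)) = -(u / (2 * e₀)) := by
          push_cast; field_simp; ring
        rw [h2] at h1
        exact h1.hasDerivWithinAt)
      (fun u hu => hρneg u hu.1)
    have hconc : -(x t)⁻¹ ≤ -(1/e₀) - t ^ 2 / (4 * e₀) := key (⟨ht, le_rfl⟩ : t ∈ Icc 0 t)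
    have hxt : 0 < x t := (hx t ht).1
    have hpos : (0:ℝ) < 1 + t ^ 2 / 4 := by positivity
    rw [le_div_iff₀ hpos]
    have h6 : (1 + t ^ 2 / 4) / e₀ ≤ (x t)⁻¹ := by
      have : (1 + t ^ 2 / 4) / e₀ = 1/e₀ + t ^ 2 / (4 * e₀) := by field_simp
      rw [this]
      linarith
    have h7 := mul_le_mul_of_nonneg_left h6 hxt.le
    rw [mul_inv_cancel₀ hxt.ne'] at h7
    have h8 : 0 < e₀ := he₀
    calc x t * (1 + t ^ 2 / 4) = (x t * ((1 + t ^ 2 / 4) / e₀)) * e₀ := by field_simp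
      _ ≤ 1 * e₀ := by nlinarith
      _ = e₀ := one_mul e₀
  constructor
  · intro t ht
    refine ⟨?_, hρneg t ht, hxquad t ht⟩
    rw [(hxd t ht).derivWithin (uniqueDiffOn_Ici 0 t ht)]
    have h1 := hρneg t ht
    have h2 : 0 ≤ t / (2 * e₀) := by positivity
    exact mul_nonpos_of_nonneg_of_nonpos (sq_nonneg _) (by linarith)
  · -- convergence of y
    set c : ℝ := 2 * Real.sqrt C₁ * e₀ with hc
    have hcpos : 0 ≤ c := by positivity
    set Φ : ℝ → ℝ := fun s => c * Real.arctan (s / 2) with hΦ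
    have hΦd : ∀ s : ℝ, HasDerivAt Φ (Real.sqrt C₁ * e₀ / (1 + s ^ 2 / 4)) s := by
      intro s
      have h1 := HasDerivAt.comp s (Real.hasDerivAt_arctan (s / 2))
        ((hasDerivAt_id s).div_const 2)
      have h2 := h1.const_mul c
      have h3 : c * (1 / (1 + (s / 2) ^ 2) * (1 / 2)) = Real.sqrt C₁ * e₀ / (1 + s ^ 2 / 4) := by
        rw [hc]
        have hp : (0:ℝ) < 1 + s ^ 2 / 4 := by positivity
        have hq : (0:ℝ) < 1 + (s / 2) ^ 2 := by positivity
        field_simp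
        ring
      rw [h3] at h2
      exact h2
    set w : ℝ → EuclideanSpace ℝ (Fin n) := fun t =>
      (EuclideanSpace.equiv (Fin n) ℝ).symm
        (fun i => (x t) ^ 2 * ∑ j, a (x t) (y t) i j * θ t j) with hwdef
    have hyD : ∀ t, 0 ≤ t → HasDerivWithinAt y (w t) (Set.Ici 0) t := by
      intro t ht
      have h1 : HasDerivWithinAt (fun s => (fun i => y s i : Fin n → ℝ))
          (fun i => (x t) ^ 2 * ∑ j, a (x t) (y t) i j * θ t j) (Set.Ici 0) t :=
        hasDerivWithinAt_pi.2 fun i => hyd t ht i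
      exact ((EuclideanSpace.equiv (Fin n) ℝ).symm.toContinuousLinearMap.hasFDerivAt
        ).comp_hasDerivWithinAt t h1
    have hwbound : ∀ t, 0 ≤ t → ‖w t‖ ≤ Real.sqrt C₁ * e₀ / (1 + t ^ 2 / 4) := by
      intro t ht
      have hxt : 0 < x t := (hx t ht).1
      have hCS := mulVec_sq_le (hsympd _ (hxm t ht) (y t)).1
        (hsympd _ (hxm t ht) (y t)).2.posSemidef hC₁
        (fun v => haC₁ _ (hxm t ht) (y t) v) (θ t)
      have hsum : ∑ i, ((x t) ^ 2 * ∑ j, a (x t) (y t) i j * θ t j) ^ 2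
          ≤ C₁ * (x t) ^ 2 := by
        have h1 : ∑ i, ((x t) ^ 2 * ∑ j, a (x t) (y t) i j * θ t j) ^ 2
            = (x t) ^ 4 * ∑ i, (∑ j, a (x t) (y t) i j * θ t j) ^ 2 := by
          rw [Finset.mul_sum]
          exact Finset.sum_congr rfl fun i _ => by ring
        rw [h1]
        have h2 : (x t) ^ 4 * ∑ i, (∑ j, a (x t) (y t) i j * θ t j) ^ 2
            ≤ (x t) ^ 4 * (C₁ * qf (a (x t) (y t)) (θ t)) :=
          mul_le_mul_of_nonneg_left hCS (by positivity)
        have h3 := hx2q t ht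
        nlinarith [h2, mul_le_mul_of_nonneg_left h3 (by positivity : (0:ℝ) ≤ C₁ * x t ^ 2)]
      have hnorm : ‖w t‖ = Real.sqrt (∑ i, ((x t) ^ 2 * ∑ j, a (x t) (y t) i j * θ t j) ^ 2) := by
        rw [EuclideanSpace.norm_eq]
        congr 1
        exact Finset.sum_congr rfl fun i _ => by
          rw [Real.norm_eq_abs, sq_abs]; rfl
      rw [hnorm]
      have h4 : Real.sqrt (∑ i, ((x t) ^ 2 * ∑ j, a (x t) (y t) i j * θ t j) ^ 2)
          ≤ Real.sqrt (C₁ * (x t) ^ 2) := Real.sqrt_le_sqrt hsum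
      have h5 : Real.sqrt (C₁ * (x t) ^ 2) = Real.sqrt C₁ * x t := by
        rw [Real.sqrt_mul hC₁.le, Real.sqrt_sq hxt.le]
      have h6 : Real.sqrt C₁ * x t ≤ Real.sqrt C₁ * (e₀ / (1 + t ^ 2 / 4)) :=
        mul_le_mul_of_nonneg_left (hxquad t ht) (Real.sqrt_nonneg _)
      calc Real.sqrt (∑ i, ((x t) ^ 2 * ∑ j, a (x t) (y t) i j * θ t j) ^ 2)
          ≤ Real.sqrt C₁ * x t := by rw [← h5]; exact h4
        _ ≤ Real.sqrt C₁ * (e₀ / (1 + t ^ 2 / 4)) := h6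
        _ = Real.sqrt C₁ * e₀ / (1 + t ^ 2 / 4) := by rw [mul_div_assoc]
    have hyineq : ∀ s b : ℝ, 0 ≤ s → s ≤ b → ‖y b - y s‖ ≤ Φ b - Φ s := by
      intro s b hs hsb
      have key := image_norm_le_of_norm_deriv_right_le_deriv_boundary
        (f := fun τ => y τ - y s) (f' := fun τ => w τ) (a := s) (b := b)
        (B := fun τ => Φ τ - Φ s) (B' := fun τ => Real.sqrt C₁ * e₀ / (1 + τ ^ 2 / 4))
        (fun u hu => (((hyD u (hs.trans hu.1)).continuousWithinAt).mono
          fun v hv => hs.trans hv.1).sub continuousWithinAt_const)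
        (fun u hu => ((hyD u (hs.trans hu.1)).mono
          fun v hv => (hs.trans hu.1).trans hv).sub_const (y s))
        (by simp)
        (fun τ => (hΦd τ).sub_const (Φ s))
        (fun u hu => hwbound u (hs.trans hu.1))
      have h1 := key (right_mem_Icc.mpr hsb)
      simpa using h1
    have hΦmono : Monotone Φ := fun u v huv =>
      mul_le_mul_of_nonneg_left (Real.arctan_strictMono.monotone (by linarith)) hcpos
    set L : ℝ := c * (Real.pi / 2) with hL
    have hΦle : ∀ s, Φ s ≤ L :=
      fun s => mul_le_mul_of_nonneg_left (Real.arctan_lt_pi_div_two _).le hcpos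
    have hcau : CauchySeq fun k : ℕ => y k := by
      apply cauchySeq_of_le_tendsto_0 (fun N : ℕ => L - Φ N)
      · intro m k N hm hk
        have hmc : (N:ℝ) ≤ (m:ℝ) := by exact_mod_cast hm
        have hkc : (N:ℝ) ≤ (k:ℝ) := by exact_mod_cast hk
        have hN0 : (0:ℝ) ≤ (N:ℝ) := Nat.cast_nonneg N
        rw [dist_eq_norm]
        rcases le_total (m:ℝ) (k:ℝ) with h | h
        · rw [norm_sub_rev]
          calc ‖y k - y m‖ ≤ Φ k - Φ m := hyineq m k (hN0.trans hmc) h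
            _ ≤ L - Φ N := by linarith [hΦle (k:ℝ), hΦmono hmc]
        · calc ‖y m - y k‖ ≤ Φ m - Φ k := hyineq k m (hN0.trans hkc) h
            _ ≤ L - Φ N := by linarith [hΦle (m:ℝ), hΦmono hkc]
      · have h2 : Tendsto (fun N : ℕ => (N:ℝ) / 2) atTop atTop :=
          (tendsto_natCast_atTop_atTop).atTop_div_const (by norm_num)
        have h1 : Tendsto (fun N : ℕ => Real.arctan ((N:ℝ) / 2)) atTop (nhds (Real.pi / 2)) :=
          (tendsto_nhds_of_tendsto_nhdsWithin Real.tendsto_arctan_atTop).comp h2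
        have h3 : Tendsto (fun N : ℕ => L - Φ N) atTop (nhds (L - L)) := by
          refine Tendsto.sub tendsto_const_nhds ?_
          have h4 := h1.const_mul c
          simpa [hΦ, hL] using h4
        simpa using h3
    obtain ⟨ylim, hylim⟩ := cauchySeq_tendsto_of_complete hcau
    refine ⟨ylim, ?_⟩
    intro t htpos
    have key : ∀ k : ℕ, t ≤ (k:ℝ) → ‖y t - y k‖ ≤ L - Φ t := by
      intro k hk
      rw [norm_sub_rev]
      calc ‖y k - y t‖ ≤ Φ k - Φ t := hyineq t k htpos.le hk
        _ ≤ L - Φ t := by linarith [hΦle (k:ℝ)]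
    have hlim2 : Tendsto (fun k : ℕ => ‖y t - y k‖) atTop (nhds ‖y t - ylim‖) :=
      (tendsto_const_nhds.sub hylim).norm
    have hfin : ‖y t - ylim‖ ≤ L - Φ t := by
      refine le_of_tendsto hlim2 ?_
      filter_upwards [eventually_ge_atTop ⌈t⌉₊] with k hk
      exact key k (le_trans (Nat.le_ceil t) (by exact_mod_cast hk))
    have harc : Real.pi / 2 - Real.arctan (t / 2) = Real.arctan (2 / t) := by
      have h1 := Real.arctan_inv_of_pos (by positivity : (0:ℝ) < t / 2)
      rw [show (t / 2)⁻¹ = 2 / t by rw [inv_div]] at h1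
      linarith
    have h9 : L - Φ t = c * Real.arctan (2 / t) := by
      have : L - Φ t = c * (Real.pi / 2 - Real.arctan (t / 2)) := by
        rw [hL, hΦ]; ring
      rw [this, harc]
    have h10 : Real.arctan (2 / t) ≤ 2 / t := arctan_le_self' (by positivity)
    calc ‖y t - ylim‖ ≤ L - Φ t := hfin
      _ = c * Real.arctan (2 / t) := h9
      _ ≤ c * (2 / t) := mul_le_mul_of_nonneg_left h10 hcpos
      _ = 4 * Real.sqrt C₁ * e₀ / t := by rw [hc]; field_simp; ring
end
end

section
/- Let D ≥ 1 and let Ψ : [0,∞) × ℝ^D → ℝ^D be a family of smooth maps Ψ^s. Let φ be a smooth compactly supported function on ℝ^D with |φ(z)| ≤ 1 for all z, let t₀ > 0 and Λ ≥ 0, and assume that for each k ∈ ℕ there is a constant D_k ≥ 1 with max_{|α|≤k} sup_{ℝ^D} |∂^α(φ ∘ Ψ^s)| ≤ D_k e^{kΛ s} for every s ≥ 0. Then for every k ∈ ℕ and every Λ₁ > Λ there is a constant C(k) such that for every integer j ≥ 1: max_{|α| ≤ k} sup_{ℝ^D} | ∂^α ( ∏_{m=0}^{j−1} (φ ∘ Ψ^{m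 t₀}) ) | ≤ C(k) e^{j k Λ₁ t₀}. -/
set_option maxHeartbeats 1000000


open Set

noncomputable section

/-- **Product estimate for propagated cutoffs (inside Proposition C.2).**
If `|φ| ≤ 1` and the `C^k` norms of `φ ∘ Ψ^s` grow at most like `D_k e^{kΛs}`, then the
`C^k` norms of the products `∏_{m<j} φ ∘ Ψ^{mt₀}` grow at most like `C(k) e^{jkΛ₁t₀}` for
any `Λ₁ > Λ`. -/
theorem stmt12 (D : ℕ) (hD : 1 ≤ D)
    (Ψ : ℝ → EuclideanSpace ℝ (Fin D) → EuclideanSpace ℝ (Fin D))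
    (hΨ : ∀ s : ℝ, 0 ≤ s → ContDiff ℝ (⊤ : ℕ∞) (Ψ s))
    (φ : EuclideanSpace ℝ (Fin D) → ℝ)
    (hφ : ContDiff ℝ (⊤ : ℕ∞) φ) (hφc : HasCompactSupport φ) (hφ1 : ∀ z, |φ z| ≤ 1)
    (t₀ Λ : ℝ) (ht₀ : 0 < t₀) (hΛ : 0 ≤ Λ)
    (hcomp : ∀ k : ℕ, ∃ Dk : ℝ, 1 ≤ Dk ∧ ∀ s : ℝ, 0 ≤ s → ∀ i ≤ k, ∀ z,
      ‖iteratedFDeriv ℝ i (fun w => φ (Ψ s w)) z‖ ≤ Dk * Real.exp ((k : ℝ) * Λ * s)) :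
    ∀ k : ℕ, ∀ Λ₁ : ℝ, Λ < Λ₁ → ∃ C : ℝ, ∀ j : ℕ, 1 ≤ j → ∀ i ≤ k, ∀ z,
      ‖iteratedFDeriv ℝ i (fun w => ∏ m ∈ Finset.range j, φ (Ψ ((m : ℝ) * t₀) w)) z‖ ≤
        C * Real.exp ((j : ℝ) * (k : ℝ) * Λ₁ * t₀) := by
  intro k Λ₁ hΛ₁
  classical
  choose Dk hDk1 hDkb using hcomp
  -- uniform constant
  set M : ℝ := ∑ n ∈ Finset.range (k + 1), Dk n with hM
  have hM1 : (1 : ℝ) ≤ M := by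
    calc (1:ℝ) ≤ Dk 0 := hDk1 0
    _ ≤ M := Finset.single_le_sum (f := Dk)
        (fun n _ => le_trans zero_le_one (hDk1 n)) (Finset.mem_range.2 (Nat.succ_pos k))
  have hDkM : ∀ n ≤ k, Dk n ≤ M :=
    fun n hn => Finset.single_le_sum (f := Dk)
      (fun m _ => le_trans zero_le_one (hDk1 m)) (Finset.mem_range.2 (Nat.lt_succ_of_le hn))
  -- single factor estimate, with the order of the derivative in the exponent
  have hg : ∀ i ≤ k, ∀ s : ℝ, 0 ≤ s → ∀ z,
      ‖iteratedFDeriv ℝ i (fun w => φ (Ψ s w)) z‖ ≤ M * Real.exp ((i : ℝ) * Λ * s) := by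
    intro i hi s hs z
    calc ‖iteratedFDeriv ℝ i (fun w => φ (Ψ s w)) z‖
        ≤ Dk i * Real.exp ((i : ℝ) * Λ * s) := hDkb i s hs i le_rfl z
      _ ≤ M * Real.exp ((i : ℝ) * Λ * s) := by
          apply mul_le_mul_of_nonneg_right (hDkM i hi) (Real.exp_nonneg _)
  set B : ℝ := 2 ^ k * M with hB
  have hB1 : (1 : ℝ) ≤ B := by
    calc (1:ℝ) = 1 * 1 := by ring
    _ ≤ 2 ^ k * M := mul_le_mul (one_le_pow₀ one_le_two) hM1 zero_le_one (by positivity)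
  have hMB : M ≤ B := by
    calc M = 1 * M := by ring
    _ ≤ 2 ^ k * M := by
        apply mul_le_mul_of_nonneg_right (one_le_pow₀ one_le_two) (by linarith)
  -- smoothness of the factors and products
  have hgc : ∀ s : ℝ, 0 ≤ s → ContDiff ℝ (⊤ : ℕ∞) (fun w => φ (Ψ s w)) :=
    fun s hs => hφ.comp (hΨ s hs)
  have hfc : ∀ j : ℕ, ContDiff ℝ (⊤ : ℕ∞)
      (fun w => ∏ m ∈ Finset.range j, φ (Ψ ((m : ℝ) * t₀) w)) := by
    intro j
    apply contDiff_prod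
    intro m _
    exact hgc _ (by positivity)
  -- zeroth order bound: the product has modulus at most one
  have hf1 : ∀ j : ℕ, ∀ z, ‖∏ m ∈ Finset.range j, φ (Ψ ((m : ℝ) * t₀) z)‖ ≤ 1 := by
    intro j z
    rw [Real.norm_eq_abs, Finset.abs_prod]
    apply Finset.prod_le_one
    · intro m _; exact abs_nonneg _
    · intro m _; exact hφ1 _
  -- main induction on j
  have key : ∀ j : ℕ, 1 ≤ j → ∀ i ≤ k, ∀ z,
      ‖iteratedFDeriv ℝ i (fun w => ∏ m ∈ Finset.range j, φ (Ψ ((m : ℝ) * t₀) w)) z‖ ≤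
        (B * j) ^ i * Real.exp ((i : ℝ) * Λ * (((j : ℝ) - 1) * t₀)) := by
    intro j hj
    induction j, hj using Nat.le_induction with
    | base =>
      intro i hi z
      rcases Nat.eq_zero_or_pos i with h0 | hpos
      · subst h0
        simp only [norm_iteratedFDeriv_zero, pow_zero, Nat.cast_zero, zero_mul, Real.exp_zero,
          one_mul]
        exact hf1 1 z
      · have h := hg i hi ((0 : ℝ) * t₀) (by simp) z
        have heq : (fun w => ∏ m ∈ Finset.range 1, φ (Ψ ((m : ℝ) * t₀) w)) =
            (fun w => φ (Ψ ((0 : ℝ) * t₀) w)) := by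
          funext w; simp
        rw [heq]
        refine h.trans ?_
        have hMBi : M ≤ B ^ i := by
          calc M ≤ B := hMB
          _ = B ^ 1 := (pow_one B).symm
          _ ≤ B ^ i := pow_le_pow_right₀ hB1 hpos
        have hrw : ((1:ℕ) : ℝ) - 1 = (0:ℝ) := by norm_num
        rw [hrw]
        simp only [zero_mul, mul_zero, Real.exp_zero, mul_one]
        calc M ≤ B ^ i := hMBi
        _ = (B * ((1:ℕ):ℝ)) ^ i := by norm_num
    | succ j hj IH =>
      intro i hi z
      have hjR : (1 : ℝ) ≤ (j : ℝ) := by exact_mod_cast hj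
      have hBj1 : (1 : ℝ) ≤ B * j := by
        calc (1:ℝ) = 1 * 1 := by ring
        _ ≤ B * j := mul_le_mul hB1 hjR zero_le_one (by linarith)
      have heq : (fun w => ∏ m ∈ Finset.range (j + 1), φ (Ψ ((m : ℝ) * t₀) w)) =
          (fun w => (∏ m ∈ Finset.range j, φ (Ψ ((m : ℝ) * t₀) w)) *
            φ (Ψ ((j : ℝ) * t₀) w)) := by
        funext w; rw [Finset.prod_range_succ]
      rw [heq]
      rcases Nat.eq_zero_or_pos i with h0 | hpos
      · subst h0
        simp only [norm_iteratedFDeriv_zero, pow_zero, Nat.cast_zero, zero_mul, Real.exp_zero,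
          one_mul]
        have := hf1 (j + 1) z
        rw [Finset.prod_range_succ] at this
        simpa using this
      -- Leibniz rule
      have hleib := norm_iteratedFDeriv_mul_le (𝕜 := ℝ)
        (hf := hfc j) (hg := hgc ((j : ℝ) * t₀) (by positivity)) z (n := i) (by exact_mod_cast le_top)
      have hexp : ∀ l ∈ Finset.range i,
          (i.choose l : ℝ) *
            ‖iteratedFDeriv ℝ l (fun w => ∏ m ∈ Finset.range j, φ (Ψ ((m : ℝ) * t₀) w)) z‖ *
            ‖iteratedFDeriv ℝ (i - l) (fun w => φ (Ψ ((j : ℝ) * t₀) w)) z‖ ≤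
          (i.choose l : ℝ) * ((B * j) ^ (i - 1) * M *
            Real.exp ((i : ℝ) * Λ * ((j : ℝ) * t₀))) := by
        intro l hl
        rw [Finset.mem_range] at hl
        have h1 := IH l (le_trans hl.le hi) z
        have h2 := hg (i - l) (le_trans (Nat.sub_le i l) hi) ((j : ℝ) * t₀) (by positivity) z
        have hbound : ‖iteratedFDeriv ℝ l
              (fun w => ∏ m ∈ Finset.range j, φ (Ψ ((m : ℝ) * t₀) w)) z‖ *
            ‖iteratedFDeriv ℝ (i - l) (fun w => φ (Ψ ((j : ℝ) * t₀) w)) z‖ ≤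
            (B * j) ^ (i - 1) * M * Real.exp ((i : ℝ) * Λ * ((j : ℝ) * t₀)) := by
          have hmul := mul_le_mul h1 h2 (norm_nonneg _) (by positivity)
          apply le_trans hmul
          have hpowle : (B * j) ^ l ≤ (B * j) ^ (i - 1) :=
            pow_le_pow_right₀ hBj1 (Nat.le_sub_one_of_lt hl)
          have hexple : Real.exp ((l : ℝ) * Λ * (((j : ℝ) - 1) * t₀)) *
              Real.exp (((i - l : ℕ) : ℝ) * Λ * ((j : ℝ) * t₀)) ≤
              Real.exp ((i : ℝ) * Λ * ((j : ℝ) * t₀)) := by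
            rw [← Real.exp_add]
            apply Real.exp_le_exp.2
            have hcast : ((i - l : ℕ) : ℝ) = (i : ℝ) - (l : ℝ) := by
              rw [Nat.cast_sub hl.le]
            rw [hcast]
            have hl0 : (0:ℝ) ≤ (l:ℝ) := Nat.cast_nonneg l
            have hil : (l:ℝ) ≤ (i:ℝ) := by exact_mod_cast hl.le
            nlinarith [mul_nonneg (mul_nonneg hl0 hΛ) ht₀.le]
          calc (B * j) ^ l * Real.exp ((l : ℝ) * Λ * (((j : ℝ) - 1) * t₀)) *
              (M * Real.exp (((i - l : ℕ) : ℝ) * Λ * ((j : ℝ) * t₀)))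
              = (B * j) ^ l * M * (Real.exp ((l : ℝ) * Λ * (((j : ℝ) - 1) * t₀)) *
                Real.exp (((i - l : ℕ) : ℝ) * Λ * ((j : ℝ) * t₀))) := by ring
            _ ≤ (B * j) ^ (i - 1) * M * Real.exp ((i : ℝ) * Λ * ((j : ℝ) * t₀)) := by
                apply mul_le_mul
                · exact mul_le_mul_of_nonneg_right hpowle (by linarith)
                · exact hexple
                · positivity
                · positivity
        rw [mul_assoc]
        exact mul_le_mul_of_nonneg_left hbound (Nat.cast_nonneg _)
      -- put things together
      have hsum : ∑ l ∈ Finset.range (i + 1), (i.choose l : ℝ) *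
            ‖iteratedFDeriv ℝ l (fun w => ∏ m ∈ Finset.range j, φ (Ψ ((m : ℝ) * t₀) w)) z‖ *
            ‖iteratedFDeriv ℝ (i - l) (fun w => φ (Ψ ((j : ℝ) * t₀) w)) z‖ ≤
          (B * (j + 1)) ^ i * Real.exp ((i : ℝ) * Λ * ((j : ℝ) * t₀)) := by
        rw [Finset.sum_range_succ]
        have hlast : (i.choose i : ℝ) *
            ‖iteratedFDeriv ℝ i (fun w => ∏ m ∈ Finset.range j, φ (Ψ ((m : ℝ) * t₀) w)) z‖ *
            ‖iteratedFDeriv ℝ (i - i) (fun w => φ (Ψ ((j : ℝ) * t₀) w)) z‖ ≤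
            (B * j) ^ i * Real.exp ((i : ℝ) * Λ * ((j : ℝ) * t₀)) := by
          rw [Nat.choose_self, Nat.sub_self]
          simp only [Nat.cast_one, one_mul, norm_iteratedFDeriv_zero]
          have h1 := IH i hi z
          have h2 : ‖φ (Ψ ((j : ℝ) * t₀) z)‖ ≤ 1 := hφ1 _
          calc ‖iteratedFDeriv ℝ i (fun w => ∏ m ∈ Finset.range j, φ (Ψ ((m : ℝ) * t₀) w)) z‖ *
                ‖φ (Ψ ((j : ℝ) * t₀) z)‖
              ≤ ((B * j) ^ i * Real.exp ((i : ℝ) * Λ * (((j : ℝ) - 1) * t₀))) * 1 :=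
                mul_le_mul h1 h2 (norm_nonneg _) (by positivity)
            _ ≤ (B * j) ^ i * Real.exp ((i : ℝ) * Λ * ((j : ℝ) * t₀)) := by
                rw [mul_one]
                apply mul_le_mul_of_nonneg_left _ (by positivity)
                apply Real.exp_le_exp.2
                have h0 : (0:ℝ) ≤ (i:ℝ) * Λ := by positivity
                have hstep1 : ((j:ℝ) - 1) * t₀ ≤ (j:ℝ) * t₀ := by nlinarith
                exact mul_le_mul_of_nonneg_left hstep1 h0
        have hrest : ∑ l ∈ Finset.range i, (i.choose l : ℝ) *
            ‖iteratedFDeriv ℝ l (fun w => ∏ m ∈ Finset.range j, φ (Ψ ((m : ℝ) * t₀) w)) z‖ *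
            ‖iteratedFDeriv ℝ (i - l) (fun w => φ (Ψ ((j : ℝ) * t₀) w)) z‖ ≤
            B * (B * j) ^ (i - 1) * Real.exp ((i : ℝ) * Λ * ((j : ℝ) * t₀)) := by
          calc ∑ l ∈ Finset.range i, (i.choose l : ℝ) *
              ‖iteratedFDeriv ℝ l (fun w => ∏ m ∈ Finset.range j, φ (Ψ ((m : ℝ) * t₀) w)) z‖ *
              ‖iteratedFDeriv ℝ (i - l) (fun w => φ (Ψ ((j : ℝ) * t₀) w)) z‖
              ≤ ∑ l ∈ Finset.range i, (i.choose l : ℝ) * ((B * j) ^ (i - 1) * M *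
                Real.exp ((i : ℝ) * Λ * ((j : ℝ) * t₀))) := Finset.sum_le_sum hexp
            _ = (∑ l ∈ Finset.range i, (i.choose l : ℝ)) * ((B * j) ^ (i - 1) * M *
                Real.exp ((i : ℝ) * Λ * ((j : ℝ) * t₀))) := by
                rw [← Finset.sum_mul]
            _ ≤ (2 : ℝ) ^ k * ((B * j) ^ (i - 1) * M *
                Real.exp ((i : ℝ) * Λ * ((j : ℝ) * t₀))) := by
                apply mul_le_mul_of_nonneg_right _ (by positivity)
                have h1 : ∑ l ∈ Finset.range i, (i.choose l : ℝ) ≤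
                    ∑ l ∈ Finset.range (i + 1), (i.choose l : ℝ) := by
                  rw [Finset.sum_range_succ]; simp [Nat.cast_nonneg]
                have h2 : ∑ l ∈ Finset.range (i + 1), (i.choose l : ℝ) = (2:ℝ) ^ i := by
                  rw [← Nat.cast_sum]
                  rw [Nat.sum_range_choose]
                  push_cast; ring
                calc ∑ l ∈ Finset.range i, (i.choose l : ℝ) ≤ (2:ℝ)^i := h1.trans h2.le
                  _ ≤ (2:ℝ)^k := pow_le_pow_right₀ one_le_two hi
            _ = B * (B * j) ^ (i - 1) * Real.exp ((i : ℝ) * Λ * ((j : ℝ) * t₀)) := by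
                rw [hB]; ring
        calc _ ≤ B * (B * j) ^ (i - 1) * Real.exp ((i : ℝ) * Λ * ((j : ℝ) * t₀)) +
              (B * j) ^ i * Real.exp ((i : ℝ) * Λ * ((j : ℝ) * t₀)) :=
            add_le_add hrest hlast
          _ = ((B * j) ^ (i - 1) * (B * j + B)) * Real.exp ((i : ℝ) * Λ * ((j : ℝ) * t₀)) := by
              have : (B * j) ^ i = (B * j) ^ (i - 1) * (B * j) := by
                rw [← pow_succ, Nat.sub_add_cancel hpos]
              rw [this]; ring
          _ ≤ (B * (j + 1)) ^ i * Real.exp ((i : ℝ) * Λ * ((j : ℝ) * t₀)) := by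
              apply mul_le_mul_of_nonneg_right _ (by positivity)
              have hBj1' : (1:ℝ) ≤ B * (j + 1) := by nlinarith
              have h1 : (B * j) ^ (i - 1) ≤ (B * (j + 1)) ^ (i - 1) := by
                apply pow_le_pow_left₀ (by linarith) (by nlinarith)
              have h2 : B * j + B = B * (j + 1) := by ring
              calc (B * j) ^ (i - 1) * (B * j + B) ≤
                  (B * (j + 1)) ^ (i - 1) * (B * (j + 1)) := by
                    rw [h2]
                    apply mul_le_mul_of_nonneg_right h1 (by linarith)
                _ = (B * (j + 1)) ^ (i - 1 + 1) := by rw [pow_succ]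
                _ = (B * (j + 1)) ^ i := by rw [Nat.sub_add_cancel hpos]
      refine le_trans hleib (le_trans hsum ?_)
      apply le_of_eq
      push_cast
      ring_nf
  -- conclusion: absorb the polynomial factor into the bigger exponential
  set δ : ℝ := (Λ₁ - Λ) * t₀ with hδ
  have hδ0 : 0 < δ := by
    apply mul_pos (by linarith) ht₀
  refine ⟨(B / δ) ^ k, ?_⟩
  intro j hj i hi z
  have hjR : (1 : ℝ) ≤ (j : ℝ) := by exact_mod_cast hj
  have hBj1 : (1 : ℝ) ≤ B * j := by nlinarith
  have h1 := key j hj i hi z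
  -- (B j)^i e^{iΛ(j-1)t₀} ≤ (B j)^k e^{kΛ j t₀}
  have h2 : (B * j) ^ i * Real.exp ((i : ℝ) * Λ * (((j : ℝ) - 1) * t₀)) ≤
      (B * j) ^ k * Real.exp ((k : ℝ) * Λ * ((j : ℝ) * t₀)) := by
    apply mul_le_mul (pow_le_pow_right₀ hBj1 hi)
    · apply Real.exp_le_exp.2
      have hik : (i : ℝ) ≤ (k : ℝ) := by exact_mod_cast hi
      have hi0 : (0:ℝ) ≤ (i:ℝ) := Nat.cast_nonneg i
      have hstep1 : ((j:ℝ) - 1) * t₀ ≤ (j:ℝ) * t₀ := by nlinarith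
      calc (i:ℝ) * Λ * (((j:ℝ) - 1) * t₀) ≤ (i:ℝ) * Λ * ((j:ℝ) * t₀) :=
          mul_le_mul_of_nonneg_left hstep1 (by positivity)
        _ ≤ (k:ℝ) * Λ * ((j:ℝ) * t₀) := by
            have h0 : (0:ℝ) ≤ (j:ℝ) * t₀ := by positivity
            exact mul_le_mul_of_nonneg_right (mul_le_mul_of_nonneg_right hik hΛ) h0
    · positivity
    · positivity
  -- j ≤ e^{δ j} / δ
  have h3 : (j : ℝ) ≤ Real.exp (δ * j) / δ := by
    rw [le_div_iff₀ hδ0]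
    have := Real.add_one_le_exp (δ * j)
    nlinarith
  have h4 : (B * j) ^ k ≤ (B / δ) ^ k * Real.exp ((k : ℝ) * δ * j) := by
    have hstep : B * (j : ℝ) ≤ B / δ * Real.exp (δ * j) := by
      calc B * (j : ℝ) ≤ B * (Real.exp (δ * j) / δ) :=
          mul_le_mul_of_nonneg_left h3 (by linarith)
        _ = B / δ * Real.exp (δ * j) := by ring
    calc (B * j) ^ k ≤ (B / δ * Real.exp (δ * j)) ^ k := by
          apply pow_le_pow_left₀ (by positivity) hstep
      _ = (B / δ) ^ k * Real.exp (δ * j) ^ k := mul_pow _ _ _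
      _ = (B / δ) ^ k * Real.exp ((k : ℝ) * δ * j) := by
          rw [← Real.exp_nat_mul]
          ring_nf
  calc ‖iteratedFDeriv ℝ i (fun w => ∏ m ∈ Finset.range j, φ (Ψ ((m : ℝ) * t₀) w)) z‖
      ≤ (B * j) ^ k * Real.exp ((k : ℝ) * Λ * ((j : ℝ) * t₀)) := le_trans h1 h2
    _ ≤ (B / δ) ^ k * Real.exp ((k : ℝ) * δ * j) * Real.exp ((k : ℝ) * Λ * ((j : ℝ) * t₀)) :=
        mul_le_mul_of_nonneg_right h4 (by positivity)
    _ = (B / δ) ^ k * Real.exp ((j : ℝ) * (k : ℝ) * Λ₁ * t₀) := by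
        rw [mul_assoc, ← Real.exp_add]
        congr 1
        rw [hδ]
        ring
end
end
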